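/- arXiv:2108.03019 — 10 statements merged into one kernel-verified Lean document; each statement's English description precedes it below -/
import Mathlib

section
/- For every abelian group A, every integer n ≥ 1 and every n-cochain f : (ℤ/mℤ)^n → A of the set-theoretic Yang–Baxter cochain complex of the cyclic biquandle C_m, the coboundary commutes with the diagonal shift: δ^n(Sf) = S(δ^n f). -/
/-- The `i`-th left face map of the set-theoretic Yang–Baxter (co)chain complex of the
cyclic biquandle `C_m = ℤ/mℤ` (with `R(a,b) = (b+1, a-1)`): it drops the `i`-th coordinate,
subtracting `1` from all earlier coordinates. -/
def dl (m n : ℕ) (i : Fin (n + 1)) (x : Fin (n + 1) → ZMod m) : Fin n → ZMod m :=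
  fun j => if (j : ℕ) < (i : ℕ) then x j.castSucc - 1 else x j.succ

/-- The `i`-th right face map: it drops the `i`-th coordinate, adding `1` to all later
coordinates. -/
def dr (m n : ℕ) (i : Fin (n + 1)) (x : Fin (n + 1) → ZMod m) : Fin n → ZMod m :=
  fun j => if (j : ℕ) < (i : ℕ) then x j.castSucc else x j.succ + 1

/-- The Yang–Baxter coboundary `δⁿ` of the cyclic biquandle `C_m` with coefficients in an
abelian group `A`:
`(δⁿ f)(x₁,…,x_{n+1}) = Σᵢ (−1)^{i−1} [f(x₁−1,…,x_{i−1}−1,x_{i+1},…) − f(x₁,…,x_{i−1},x_{i+1}+1,…)]`. -/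
def delta {A : Type*} [AddCommGroup A] (m n : ℕ) (f : (Fin n → ZMod m) → A) :
    (Fin (n + 1) → ZMod m) → A :=
  fun x => ∑ i : Fin (n + 1), (-1 : ℤ) ^ (i : ℕ) • (f (dl m n i x) - f (dr m n i x))

/-- The diagonal shift operator `S` on cochains: `(Sf)(x₁,…,x_k) = f(x₁−1,…,x_k−1)`. -/
def shiftC {A : Type*} (m k : ℕ) (f : (Fin k → ZMod m) → A) : (Fin k → ZMod m) → A :=
  fun x => f fun j => x j - 1

/-- for every abelian group `A`, every `n ≥ 1` and every `n`-cochain `f` of the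
Yang–Baxter cochain complex of the cyclic biquandle `C_m`, the coboundary commutes with the
diagonal shift: `δ(Sf) = S(δf)`. (Here the `n`-cochains, `n ≥ 1`, are realized as degree
`n+1`-cochains with `n : ℕ` arbitrary.) -/
theorem delta_shift_comm {A : Type*} [AddCommGroup A] (m n : ℕ) (hm : 1 ≤ m)
    (f : (Fin (n + 1) → ZMod m) → A) :
    delta m (n + 1) (shiftC m (n + 1) f) = shiftC m (n + 2) (delta m (n + 1) f) := by
  funext x
  simp only [delta, shiftC]
  refine Finset.sum_congr rfl fun i _ => ?_
  have h1 : (fun j => dl m (n + 1) i x j - 1) = dl m (n + 1) i fun j => x j - 1 := by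
    funext j; simp only [dl]; split <;> ring
  have h2 : (fun j => dr m (n + 1) i x j - 1) = dr m (n + 1) i fun j => x j - 1 := by
    funext j; simp only [dr]; split <;> ring
  rw [h1, h2]
end

section
/- For every abelian group A, every integer n ≥ 1 and every n-cochain f : (ℤ/mℤ)^n → A that is shift-invariant (i.e. Sf = f, equivalently f(x_1−1,…,x_n−1) = f(x_1,…,x_n) for all tuples), one has δ^n f = 0; that is, every shift-invariant cochain of the Yang–Baxter cochain complex of the cyclic biquandle C_m is a cocycle. -/
/-- every shift-invariant cochain of the Yang–Baxter cochain complex of the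
cyclic biquandle `C_m` is a cocycle: if `Sf = f` then `δf = 0`. (The `n`-cochains, `n ≥ 1`,
are realized as degree `n+1`-cochains with `n : ℕ` arbitrary.) -/
theorem delta_of_shift_invariant {A : Type*} [AddCommGroup A] (m n : ℕ) (hm : 1 ≤ m)
    (f : (Fin (n + 1) → ZMod m) → A) (hf : shiftC m (n + 1) f = f) :
    delta m (n + 1) f = 0 := by
  funext x
  show ∑ i : Fin (n + 2), (-1 : ℤ) ^ (i : ℕ) • (f (dl m (n+1) i x) - f (dr m (n+1) i x)) = 0
  apply Finset.sum_eq_zero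
  intro i _
  have key : dl m (n+1) i x = fun j => dr m (n+1) i x j - 1 := by
    funext j
    simp only [dl, dr]
    split <;> ring
  have : f (dl m (n+1) i x) = f (dr m (n+1) i x) := by
    rw [key]
    exact congrFun hf (dr m (n+1) i x)
  rw [this, sub_self, smul_zero]
end

section
/- Let f : (ℤ/mℤ)^n → ℚ be an n-cocycle of the Yang–Baxter cochain complex of the cyclic biquandle C_m (i.e. δ^n f = 0). Then f is cohomologous to the average of its shifts: there exists an (n−1)-cochain g : (ℤ/mℤ)^{n−1} → ℚ with δ^{n−1} g = f − (1/m)·Σ_{i=0}^{m−1} S^i f, where S^i f(x_1,…,x_n) = f(x_1−i,…,x_n−i). -/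
open Finset

variable {A : Type*} [AddCommGroup A] {m : ℕ}

section Faces

variable {n : ℕ} (i : Fin (n + 1)) (x : Fin (n + 1) → ZMod m)

lemma dl_castSucc_snoc (c : ZMod m) :
    dl m (n + 1) i.castSucc (Fin.snoc x c) = Fin.snoc (dl m n i x) c := by
  funext j
  refine Fin.lastCases ?_ (fun k => ?_) j
  · have : ¬ ((Fin.last n : Fin (n + 1)) : ℕ) < (i.castSucc : ℕ) := by simp; omega
    simp only [dl, this, if_false, Fin.succ_last, Fin.snoc_last]
  · simp only [dl, Fin.val_castSucc, Fin.snoc_castSucc, Fin.succ_castSucc]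

lemma dr_castSucc_snoc (c : ZMod m) :
    dr m (n + 1) i.castSucc (Fin.snoc x c) = Fin.snoc (dr m n i x) (c + 1) := by
  funext j
  refine Fin.lastCases ?_ (fun k => ?_) j
  · have : ¬ ((Fin.last n : Fin (n + 1)) : ℕ) < (i.castSucc : ℕ) := by simp; omega
    simp only [dr, this, if_false, Fin.succ_last, Fin.snoc_last]
  · simp only [dr, Fin.val_castSucc, Fin.snoc_castSucc, Fin.succ_castSucc]

lemma dl_last_snoc (c : ZMod m) :
    dl m (n + 1) (Fin.last (n + 1)) (Fin.snoc x c) = fun j => x j - 1 := by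
  funext j
  simp [dl, j.is_lt]

lemma dr_last_snoc (c : ZMod m) : dr m (n + 1) (Fin.last (n + 1)) (Fin.snoc x c) = x := by
  funext j
  simp [dr, j.is_lt]

lemma dl_sub_const (a : ZMod m) :
    dl m n i (fun j => x j - a) = fun j => dl m n i x j - a := by
  funext j; simp only [dl]; split <;> ring

lemma dr_sub_const (a : ZMod m) :
    dr m n i (fun j => x j - a) = fun j => dr m n i x j - a := by
  funext j; simp only [dr]; split <;> ring

end Faces

section Coboundary

variable (m) in
def deltaHom (n : ℕ) : ((Fin n → ZMod m) → A) →+ ((Fin (n + 1) → ZMod m) → A) :=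
  AddMonoidHom.mk' (delta m n) fun f g => by
    funext x
    simp only [delta, Pi.add_apply, ← sum_add_distrib, ← smul_add]
    congr! 2
    abel

@[simp]
lemma deltaHom_apply (n : ℕ) (f : (Fin n → ZMod m) → A) : deltaHom m n f = delta m n f := rfl

lemma delta_comp_sub_const {n : ℕ} (g : (Fin n → ZMod m) → A) (a : ZMod m)
    (x : Fin (n + 1) → ZMod m) :
    delta m n (fun y => g fun j => y j - a) x = delta m n g (fun j => x j - a) := by
  simp only [delta, dl_sub_const, dr_sub_const]

lemma delta_snoc {n : ℕ} (f : (Fin (n + 1) → ZMod m) → A) (x : Fin (n + 1) → ZMod m)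
    (c : ZMod m) :
    delta m (n + 1) f (Fin.snoc x c) =
      ∑ i : Fin (n + 1), (-1 : ℤ) ^ (i : ℕ) •
          (f (Fin.snoc (dl m n i x) c) - f (Fin.snoc (dr m n i x) (c + 1))) +
        (-1 : ℤ) ^ (n + 1) • (shiftC m (n + 1) f x - f x) := by
  rw [delta, Fin.sum_univ_castSucc]
  simp only [dl_castSucc_snoc, dr_castSucc_snoc, dl_last_snoc, dr_last_snoc, Fin.val_last,
    Fin.val_castSucc, shiftC]

end Coboundary

section FiberSum

variable [NeZero m]

def fiberSum {k : ℕ} (f : (Fin (k + 1) → ZMod m) → A) : (Fin k → ZMod m) → A :=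
  fun y => ∑ c : ZMod m, f (Fin.snoc y c)

lemma fiberSum_delta_sub_delta_fiberSum {n : ℕ} (f : (Fin (n + 1) → ZMod m) → A) :
    fiberSum (delta m (n + 1) f) - delta m n (fiberSum f) =
      ((-1 : ℤ) ^ (n + 1) * m) • (shiftC m (n + 1) f - f) := by
  funext x
  have reindex : ∀ y : Fin n → ZMod m,
      ∑ c : ZMod m, f (Fin.snoc y (c + 1)) = ∑ c : ZMod m, f (Fin.snoc y c) := fun y =>
    Fintype.sum_equiv (Equiv.addRight 1) _ _ fun _ => rfl
  have faces : ∑ c : ZMod m, ∑ i : Fin (n + 1), (-1 : ℤ) ^ (i : ℕ) •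
      (f (Fin.snoc (dl m n i x) c) - f (Fin.snoc (dr m n i x) (c + 1))) =
      delta m n (fiberSum f) x := by
    rw [sum_comm]
    simp only [delta, fiberSum, ← smul_sum, sum_sub_distrib, reindex]
  simp only [Pi.sub_apply, Pi.smul_apply, fiberSum, delta_snoc, sum_add_distrib, sum_const,
    card_univ, ZMod.card]
  rw [faces, mul_comm, mul_smul, natCast_zsmul]
  abel

theorem exists_delta_eq_sub_shiftC [Module ℚ A] {n : ℕ} {f : (Fin (n + 1) → ZMod m) → A}
    (hf : delta m (n + 1) f = 0) : ∃ g, delta m n g = f - shiftC m (n + 1) f := by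
  refine ⟨((-1 : ℚ) ^ (n + 1) / m) • fiberSum f, ?_⟩
  have key := fiberSum_delta_sub_delta_fiberSum f
  have fiberSum_zero : fiberSum (0 : (Fin (n + 2) → ZMod m) → A) = 0 := by
    funext; simp [fiberSum]
  rw [hf, fiberSum_zero, zero_sub, neg_eq_iff_eq_neg, ← smul_neg, neg_sub] at key
  have unit : ((-1 : ℚ) ^ (n + 1) / m) * (((-1 : ℤ) ^ (n + 1) * m : ℤ) : ℚ) = 1 := by
    have : (m : ℚ) ≠ 0 := NeZero.ne _
    push_cast
    field_simp
    rw [← pow_mul, Even.neg_one_pow ⟨n + 1, by ring⟩]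
  rw [← deltaHom_apply, map_rat_smul, deltaHom_apply, key, ← Int.cast_smul_eq_zsmul ℚ, smul_smul,
    unit, one_smul]

end FiberSum

lemma delta_sum_translates {n : ℕ} {f : (Fin (n + 1) → ZMod m) → A}
    {g : (Fin n → ZMod m) → A} (hg : delta m n g = f - shiftC m (n + 1) f) (i : ℕ) :
    delta m n (∑ k ∈ range i, fun y => g fun j => y j - k) =
      f - fun x => f fun j => x j - (i : ZMod m) := by
  rw [← deltaHom_apply, map_sum]
  funext x
  have step : ∀ k : ℕ, delta m n (fun y => g fun j => y j - k) x =
      f (fun j => x j - (k : ZMod m)) - f (fun j => x j - ((k + 1 : ℕ) : ZMod m)) := fun k => by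
    rw [delta_comp_sub_const, hg]
    simp only [Pi.sub_apply, shiftC, Nat.cast_succ, sub_add_eq_sub_sub]
  simp only [deltaHom_apply, Finset.sum_apply, step, Pi.sub_apply]
  rw [sum_range_sub' (fun k : ℕ => f fun j => x j - (k : ZMod m))]
  simp

/-- an `n`-cocycle `f` (with rational coefficients) of the Yang–Baxter cochain
complex of the cyclic biquandle `C_m` is cohomologous to the average of its shifts:
there is an `(n−1)`-cochain `g` with `δg = f − (1/m)·Σ_{i=0}^{m−1} Sⁱf`.
(The `n`-cochains, `n ≥ 1`, are realized as degree `n+1`-cochains with `n : ℕ` arbitrary.) -/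
theorem cocycle_cohomologous_to_shift_average (m n : ℕ) (hm : 1 ≤ m)
    (f : (Fin (n + 1) → ZMod m) → ℚ) (hf : delta m (n + 1) f = 0) :
    ∃ g : (Fin n → ZMod m) → ℚ,
      delta m n g =
        f - fun x => (m : ℚ)⁻¹ * ∑ i ∈ Finset.range m, f fun j => x j - (i : ZMod m) := by
  have : NeZero m := ⟨by omega⟩
  obtain ⟨g₀, hg₀⟩ := exists_delta_eq_sub_shiftC hf
  refine ⟨(m : ℚ)⁻¹ • ∑ i ∈ range m, ∑ k ∈ range i, fun y => g₀ fun j => y j - k, ?_⟩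
  rw [← deltaHom_apply, map_rat_smul, map_sum]
  simp only [deltaHom_apply, delta_sum_translates hg₀]
  funext x
  have hm0 : (m : ℚ) ≠ 0 := NeZero.ne _
  simp only [Pi.smul_apply, Pi.sub_apply, Finset.sum_apply, sum_sub_distrib, sum_const, card_range,
    smul_eq_mul, nsmul_eq_mul, Pi.mul_apply, Pi.natCast_apply]
  field_simp
end

section
/- Let f : (ℤ/mℤ)^n → ℚ be an n-cocycle of the Yang–Baxter cochain complex of the cyclic biquandle C_m (δ^n f = 0) whose shift-average vanishes, i.e. Σ_{i=0}^{m−1} S^i f = 0. Then f is a coboundary: there exists an (n−1)-cochain g with δ^{n−1} g = f. (Equivalently, the complement (1−P) of the shift-averaging projection P yields an acyclic subcomplex of the rational Yang–Baxter cochain complex of C_m.) -/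
namespace CyclicBiquandle

open Finset

abbrev Cochain (m k : ℕ) (A : Type*) := (Fin k → ZMod m) → A

lemma sum_range_tsub_nsmul_sub {V : Type*} [AddCommGroup V] (G : ℕ → V) (n : ℕ) :
    ∑ j ∈ range n, (n - 1 - j) • (G j - G (j + 1)) = n • G 0 - ∑ j ∈ range n, G j := by
  induction n with
  | zero => simp
  | succ n ih =>
    have hsplit : ∀ j ∈ range n, (n - j) • (G j - G (j + 1)) =
        (n - 1 - j) • (G j - G (j + 1)) + (G j - G (j + 1)) := by
      intro j hj
      rw [← succ_nsmul]
      congr 1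
      have := mem_range.mp hj
      omega
    rw [sum_range_succ, Nat.add_sub_cancel, Nat.sub_self, zero_smul, add_zero,
      sum_congr rfl hsplit, sum_add_distrib, ih, sum_range_sub', sum_range_succ, succ_nsmul]
    abel

lemma sum_range_natCast_eq_sum_univ {M : Type*} [AddCommMonoid M] {m : ℕ} [NeZero m]
    (φ : ZMod m → M) : ∑ i ∈ range m, φ i = ∑ c, φ c := by
  obtain ⟨n, rfl⟩ : ∃ n, m = n + 1 := Nat.exists_eq_succ_of_ne_zero (NeZero.ne m)
  rw [← Fin.sum_univ_eq_sum_range (fun i => φ i)]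
  exact Fintype.sum_congr _ _ fun c => congrArg φ (ZMod.natCast_zmod_val (n := n + 1) c)

variable {A : Type*} [AddCommGroup A] [Module ℚ A] {m k : ℕ}

lemma dl_add_const (i : Fin (k + 1)) (x : Fin (k + 1) → ZMod m) (c : ZMod m) :
    dl m k i (fun j => x j + c) = fun j => dl m k i x j + c := by
  funext j; simp only [dl]; split <;> ring

lemma dr_eq_dl_add_one (i : Fin (k + 1)) (x : Fin (k + 1) → ZMod m) :
    dr m k i x = fun j => dl m k i x j + 1 := by
  funext j; simp only [dl, dr]; split <;> ring

lemma dl_castSucc_snoc (i : Fin (k + 1)) (x : Fin (k + 1) → ZMod m) (a : ZMod m) :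
    dl m (k + 1) i.castSucc (Fin.snoc x a) = Fin.snoc (dl m k i x) a := by
  funext j
  refine Fin.lastCases ?_ (fun j => ?_) j
  · simp [dl, Fin.succ_last, i.is_le]
  · simp only [dl, Fin.val_castSucc, Fin.snoc_castSucc, Fin.succ_castSucc]

lemma dl_last_snoc (x : Fin (k + 1) → ZMod m) (a : ZMod m) :
    dl m (k + 1) (Fin.last (k + 1)) (Fin.snoc x a) = fun j => x j - 1 := by
  funext j
  simp [dl, j.is_lt, Fin.snoc_castSucc]

def diagTranslate (c : ZMod m) : Cochain m k A →ₗ[ℚ] Cochain m k A :=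
  LinearMap.funLeft ℚ A fun x j => x j + c

@[simp]
lemma diagTranslate_apply (c : ZMod m) (h : Cochain m k A) (x : Fin k → ZMod m) :
    diagTranslate c h x = h fun j => x j + c := rfl

lemma diagTranslate_zero (h : Cochain m k A) : diagTranslate 0 h = h := by
  funext x; simp

lemma diagTranslate_diagTranslate (a b : ZMod m) (h : Cochain m k A) :
    diagTranslate a (diagTranslate b h) = diagTranslate (a + b) h := by
  funext x; simp [add_assoc]

lemma diagTranslate_comm (a b : ZMod m) (h : Cochain m k A) :
    diagTranslate a (diagTranslate b h) = diagTranslate b (diagTranslate a h) := by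
  rw [diagTranslate_diagTranslate, diagTranslate_diagTranslate, add_comm]

def leftCoboundary : Cochain m k A →ₗ[ℚ] Cochain m (k + 1) A :=
  ∑ i : Fin (k + 1), (-1 : ℤ) ^ (i : ℕ) • LinearMap.funLeft ℚ A (dl m k i)

lemma leftCoboundary_apply (h : Cochain m k A) (x : Fin (k + 1) → ZMod m) :
    leftCoboundary h x = ∑ i : Fin (k + 1), (-1 : ℤ) ^ (i : ℕ) • h (dl m k i x) := by
  simp [leftCoboundary, LinearMap.funLeft_apply]

lemma delta_eq_leftCoboundary (h : Cochain m k A) :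
    delta m k h = leftCoboundary (h - diagTranslate 1 h) := by
  funext x
  simp [delta, leftCoboundary_apply, dr_eq_dl_add_one]

lemma leftCoboundary_diagTranslate (c : ZMod m) (h : Cochain m k A) :
    leftCoboundary (diagTranslate c h) = diagTranslate c (leftCoboundary h) := by
  funext x
  simp [leftCoboundary_apply, dl_add_const]

def extendLast (a : ZMod m) : Cochain m (k + 1) A →ₗ[ℚ] Cochain m k A :=
  LinearMap.funLeft ℚ A fun y => Fin.snoc (fun j => y j + 1) a

@[simp]
lemma extendLast_apply (a : ZMod m) (u : Cochain m (k + 1) A) (y : Fin k → ZMod m) :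
    extendLast a u y = u (Fin.snoc (fun j => y j + 1) a) := rfl

lemma extendLast_leftCoboundary (a : ZMod m) (u : Cochain m (k + 1) A) :
    extendLast a (leftCoboundary u) =
      leftCoboundary (extendLast a u) + (-1 : ℤ) ^ (k + 1) • u := by
  funext y
  simp [leftCoboundary_apply, Fin.sum_univ_castSucc, dl_castSucc_snoc, dl_last_snoc, dl_add_const]

lemma extendLast_diagTranslate (a c : ZMod m) (u : Cochain m (k + 1) A) :
    extendLast a (diagTranslate c u) = diagTranslate c (extendLast (a + c) u) := by
  funext y
  simp only [extendLast_apply, diagTranslate_apply]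
  congr 1
  funext j
  refine Fin.lastCases ?_ (fun j => ?_) j
  · simp
  · simp [add_right_comm]

def contraction [NeZero m] : Cochain m (k + 1) A →ₗ[ℚ] Cochain m k A :=
  ((-1) ^ k / m : ℚ) • ∑ a : ZMod m, extendLast a

lemma contraction_diagTranslate [NeZero m] (c : ZMod m) (u : Cochain m (k + 1) A) :
    contraction (diagTranslate c u) = diagTranslate c (contraction u) := by
  simp only [contraction, LinearMap.smul_apply, LinearMap.sum_apply,
    extendLast_diagTranslate, map_smul, map_sum]
  congr 1
  exact Fintype.sum_equiv (Equiv.addRight c) _ _ fun _ => rfl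

theorem leftCoboundary_contraction_add_contraction_leftCoboundary [NeZero m]
    (u : Cochain m (k + 1) A) :
    leftCoboundary (contraction u) + contraction (leftCoboundary u) = u := by
  simp only [contraction, LinearMap.smul_apply, LinearMap.sum_apply,
    extendLast_leftCoboundary, map_smul, map_sum, sum_add_distrib, sum_const, card_univ, ZMod.card]
  have hm : (m : ℚ) ≠ 0 := NeZero.ne _
  match_scalars <;> field_simp
  · ring
  · rw [← pow_mul, mul_comm, pow_mul, neg_one_sq, one_pow]

def antiDifference : Cochain m k A →ₗ[ℚ] Cochain m k A :=
  (m : ℚ)⁻¹ • ∑ j ∈ range m, (m - 1 - j) • diagTranslate (j : ZMod m)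

lemma antiDifference_sub_diagTranslate_one [NeZero m] (h : Cochain m k A) :
    antiDifference h - diagTranslate 1 (antiDifference h) =
      h - (m : ℚ)⁻¹ • ∑ j ∈ range m, diagTranslate (j : ZMod m) h := by
  have hm : (m : ℚ) ≠ 0 := NeZero.ne _
  have hsum := sum_range_tsub_nsmul_sub (fun j => diagTranslate (j : ZMod m) h) m
  simp only [Nat.cast_zero, diagTranslate_zero, Nat.cast_succ, add_comm _ (1 : ZMod m)] at hsum
  simp only [antiDifference, LinearMap.smul_apply, LinearMap.sum_apply, map_smul, map_sum,
    map_nsmul, diagTranslate_diagTranslate]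
  rw [← smul_sub, ← sum_sub_distrib]
  simp only [← smul_sub]
  rw [hsum, smul_sub, ← Nat.cast_smul_eq_nsmul ℚ, smul_smul, inv_mul_cancel₀ hm, one_smul]

lemma map_antiDifference {k' : ℕ} (L : Cochain m k A →ₗ[ℚ] Cochain m k' A)
    (hL : ∀ c h, L (diagTranslate c h) = diagTranslate c (L h)) (h : Cochain m k A) :
    L (antiDifference h) = antiDifference (L h) := by
  simp [antiDifference, map_sum, hL]

lemma delta_antiDifference (h : Cochain m k A) :
    delta m k (antiDifference h) = antiDifference (delta m k h) := by
  rw [delta_eq_leftCoboundary, delta_eq_leftCoboundary,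
    map_antiDifference (diagTranslate 1) (diagTranslate_comm 1), ← map_sub,
    map_antiDifference _ leftCoboundary_diagTranslate]

lemma sum_range_diagTranslate_apply [NeZero m] (h : Cochain m k A) (x : Fin k → ZMod m) :
    (∑ j ∈ range m, diagTranslate (j : ZMod m) h) x =
      ∑ i ∈ range m, h fun j => x j - (i : ZMod m) := by
  rw [Finset.sum_apply, sum_range_natCast_eq_sum_univ (fun c => diagTranslate c h x),
    sum_range_natCast_eq_sum_univ (fun c => h fun j => x j - c)]
  exact Fintype.sum_equiv (Equiv.neg _) _ _ fun c => by simp [sub_eq_add_neg]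

end CyclicBiquandle

open CyclicBiquandle

/-- an `n`-cocycle `f` (with rational coefficients) of the Yang–Baxter cochain
complex of the cyclic biquandle `C_m` whose shift-average vanishes, `Σ_{i=0}^{m−1} Sⁱf = 0`,
is a coboundary. (The `n`-cochains, `n ≥ 1`, are realized as degree `n+1`-cochains with
`n : ℕ` arbitrary.) -/
theorem cocycle_with_vanishing_shift_average_is_coboundary (m n : ℕ) (hm : 1 ≤ m)
    (f : (Fin (n + 1) → ZMod m) → ℚ) (hf : delta m (n + 1) f = 0)
    (hav : (fun x => ∑ i ∈ Finset.range m, f fun j => x j - (i : ZMod m)) =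
      (0 : (Fin (n + 1) → ZMod m) → ℚ)) :
    ∃ g : (Fin n → ZMod m) → ℚ, delta m n g = f := by
  have : NeZero m := ⟨by omega⟩
  have hF : antiDifference f - diagTranslate 1 (antiDifference f) = f := by
    have hsum : ∑ j ∈ Finset.range m, diagTranslate (j : ZMod m) f = 0 :=
      funext fun x => (sum_range_diagTranslate_apply f x).trans (congrFun hav x)
    rw [antiDifference_sub_diagTranslate_one, hsum, smul_zero, sub_zero]
  have hdf : leftCoboundary f = 0 := by
    rw [← hF, ← delta_eq_leftCoboundary, delta_antiDifference, hf, map_zero]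
  refine ⟨contraction (antiDifference f), ?_⟩
  rw [delta_eq_leftCoboundary, ← contraction_diagTranslate, ← map_sub, hF]
  simpa [hdf] using leftCoboundary_contraction_add_contraction_leftCoboundary f
end

section
/- For the cyclic biquandle C_m of order m, the n-th Betti number equals m^{n−1}: the ℚ-vector space H^n_{YB}(C_m;ℚ) = ker δ^n / im δ^{n−1} of the rational set-theoretic Yang–Baxter cochain complex of C_m has dimension m^{n−1}. -/
/-- The Yang–Baxter coboundary of the cyclic biquandle `C_m` with rational coefficients,
as a `ℚ`-linear map. -/
def deltaLin (m n : ℕ) : ((Fin n → ZMod m) → ℚ) →ₗ[ℚ] ((Fin (n + 1) → ZMod m) → ℚ) where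
  toFun f := delta m n f
  map_add' f g := by
    funext x
    simp only [delta, Pi.add_apply]
    rw [← Finset.sum_add_distrib]
    exact Finset.sum_congr rfl fun i _ => by rw [← smul_add]; ring_nf
  map_smul' c f := by
    funext x
    simp only [delta, Pi.smul_apply, RingHom.id_apply, Finset.smul_sum]
    exact Finset.sum_congr rfl fun i _ => by rw [← smul_sub c, smul_comm]

section AuxYB

/-- alternating sum of left faces -/
def dLm (m k : ℕ) (f : (Fin k → ZMod m) → ℚ) : (Fin (k + 1) → ZMod m) → ℚ :=
  fun x => ∑ i : Fin (k + 1), (-1 : ℚ) ^ (i : ℕ) * f (dl m k i x)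

/-- diagonal translation by 1 -/
def trl (m k : ℕ) (f : (Fin k → ZMod m) → ℚ) : (Fin k → ZMod m) → ℚ :=
  fun x => f fun i => x i + 1

lemma dl_shift (m k : ℕ) (i : Fin (k+1)) (x : Fin (k+1) → ZMod m) (a : ZMod m) :
    dl m k i (fun p => x p + a) = fun q => dl m k i x q + a := by
  funext q
  simp only [dl]
  split_ifs <;> ring

lemma dr_eq_dl (m k : ℕ) (i : Fin (k+1)) (x : Fin (k+1) → ZMod m) :
    dr m k i x = fun j => dl m k i x j + 1 := by
  funext j
  simp only [dl, dr]
  split_ifs <;> ring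

lemma delta_eq_dLm (m k : ℕ) (f : (Fin k → ZMod m) → ℚ) :
    delta m k f = dLm m k (f - trl m k f) := by
  funext x
  simp only [delta, dLm, Pi.sub_apply, trl]
  refine Finset.sum_congr rfl fun i _ => ?_
  rw [dr_eq_dl, zsmul_eq_mul]
  push_cast
  ring

lemma dl_dl (m k : ℕ) (i : Fin (k+1)) (j : Fin (k+2)) (h : (i:ℕ) < (j:ℕ))
    (x : Fin (k+2) → ZMod m) :
    dl m k i (dl m (k+1) j x) =
      dl m k ⟨(j:ℕ) - 1, by omega⟩ (dl m (k+1) ⟨(i:ℕ), by omega⟩ x) := by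
  funext q
  simp only [dl, Fin.coe_castSucc, Fin.val_succ]
  split_ifs <;> first | rfl | omega

lemma pair_term (m k : ℕ) (f : (Fin k → ZMod m) → ℚ) (x : Fin (k+2) → ZMod m)
    (i : Fin (k+1)) (j : Fin (k+2)) (h : (i:ℕ) < (j:ℕ)) :
    (-1 : ℚ) ^ (j : ℕ) * ((-1 : ℚ) ^ (i : ℕ) * f (dl m k i (dl m (k+1) j x)))
    + (-1 : ℚ) ^ (i : ℕ) * ((-1 : ℚ) ^ ((j:ℕ) - 1) *
          f (dl m k ⟨(j:ℕ) - 1, by omega⟩ (dl m (k+1) ⟨(i:ℕ), by omega⟩ x))) = 0 := by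
  rw [dl_dl m k i j h x]
  generalize f (dl m k _ (dl m (k+1) _ x)) = v
  set a := (j : ℕ) - 1 with ha
  rw [show (j : ℕ) = a + 1 by omega]
  ring

lemma dLm_dLm (m k : ℕ) (f : (Fin k → ZMod m) → ℚ) :
    dLm m (k+1) (dLm m k f) = 0 := by
  funext x
  simp only [dLm, Finset.mul_sum, Pi.zero_apply]
  rw [← Finset.sum_product']
  refine Finset.sum_involution
    (fun p _ => if h : (p.2 : ℕ) < (p.1 : ℕ)
      then ((⟨(p.2 : ℕ), by omega⟩ : Fin (k+2)), (⟨(p.1 : ℕ) - 1, by omega⟩ : Fin (k+1)))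
      else ((⟨(p.2 : ℕ) + 1, by omega⟩ : Fin (k+2)), (⟨(p.1 : ℕ), by omega⟩ : Fin (k+1))))
    (fun p _ => ?_) (fun p _ hne => ?_) (fun p _ => Finset.mem_univ _) (fun p _ => ?_)
  · by_cases h : (p.2 : ℕ) < (p.1 : ℕ)
    · simp only [dif_pos h, Fin.eta]
      exact pair_term m k f x p.2 p.1 h
    · simp only [dif_neg h, Fin.eta, Nat.add_sub_cancel]
      have h2 : ((⟨(p.1 : ℕ), by omega⟩ : Fin (k+1)) : ℕ) <
          ((⟨(p.2 : ℕ) + 1, by omega⟩ : Fin (k+2)) : ℕ) := by simp; omega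
      have := pair_term m k f x ⟨(p.1 : ℕ), by omega⟩ ⟨(p.2 : ℕ) + 1, by omega⟩ h2
      simp only [Fin.eta, Nat.add_sub_cancel] at this
      rw [add_comm] at this
      exact this
  · intro heq
    have := congrArg (fun q : Fin (k+2) × Fin (k+1) => (q.1 : ℕ)) heq
    by_cases h : (p.2 : ℕ) < (p.1 : ℕ)
    · simp only [dif_pos h] at this
      omega
    · simp only [dif_neg h] at this
      omega
  · by_cases h : (p.2 : ℕ) < (p.1 : ℕ)
    · simp only [dif_pos h]
      have h2 : ¬ (((⟨(p.1 : ℕ) - 1, by omega⟩ : Fin (k+1)) : ℕ) <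
          ((⟨(p.2 : ℕ), by omega⟩ : Fin (k+2)) : ℕ)) := by simp; omega
      simp only [dif_neg h2]
      refine Prod.ext ?_ ?_ <;> apply Fin.ext <;> simp <;> omega
    · simp only [dif_neg h]
      have h2 : (((⟨(p.1 : ℕ), by omega⟩ : Fin (k+1)) : ℕ) <
          ((⟨(p.2 : ℕ) + 1, by omega⟩ : Fin (k+2)) : ℕ)) := by simp; omega
      simp only [dif_pos h2]
      refine Prod.ext ?_ ?_ <;> apply Fin.ext <;> simp

def KavF (m : ℕ) [NeZero m] (k : ℕ) (f : (Fin (k + 1) → ZMod m) → ℚ) :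
    (Fin k → ZMod m) → ℚ :=
  fun x => (m : ℚ)⁻¹ * ∑ b : ZMod m, f (Fin.cons b x)

lemma dl_zero_cons (m k : ℕ) (b : ZMod m) (x : Fin (k+1) → ZMod m) :
    dl m (k+1) 0 (Fin.cons b x) = x := by
  funext j
  simp [dl]

lemma dl_succ_cons (m k : ℕ) (i : Fin (k+1)) (b : ZMod m) (x : Fin (k+1) → ZMod m) :
    dl m (k+1) i.succ (Fin.cons b x) = Fin.cons (b - 1) (dl m k i x) := by
  funext j
  refine Fin.cases ?_ (fun p => ?_) j
  · simp [dl]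
  · simp only [dl, Fin.cons_succ, Fin.val_succ, Fin.coe_castSucc]
    by_cases h : (p : ℕ) < (i : ℕ)
    · rw [if_pos (by omega), if_pos h]
      have : p.succ.castSucc = p.castSucc.succ := (Fin.succ_castSucc p).symm
      rw [this, Fin.cons_succ]
    · rw [if_neg (by omega), if_neg h]

lemma neg_sum_aux (k : ℕ) (g : Fin k → ℚ) :
    ∑ i : Fin k, (-1 : ℚ) ^ ((i : ℕ) + 1) * g i = -∑ i : Fin k, (-1 : ℚ) ^ (i : ℕ) * g i := by
  rw [← Finset.sum_neg_distrib]
  exact Finset.sum_congr rfl fun i _ => by ring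

lemma homotopy (m : ℕ) [NeZero m] (k : ℕ) (f : (Fin (k+1) → ZMod m) → ℚ) :
    dLm m k (KavF m k f) + KavF m (k+1) (dLm m (k+1) f) = f := by
  have hm : (m : ℚ) ≠ 0 := by
    exact_mod_cast Nat.cast_ne_zero.mpr (NeZero.ne m)
  funext x
  have step1 : ∀ b : ZMod m, (dLm m (k+1) f) (Fin.cons b x) =
      f x - ∑ i : Fin (k+1), (-1 : ℚ) ^ (i : ℕ) * f (Fin.cons (b-1) (dl m k i x)) := by
    intro b
    simp only [dLm]
    rw [Fin.sum_univ_succ, dl_zero_cons]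
    simp only [Fin.val_zero, pow_zero, one_mul, Fin.val_succ, dl_succ_cons]
    rw [neg_sum_aux (k+1) (fun i => f (Fin.cons (b - 1) (dl m k i x)))]
    ring
  have step2 : KavF m (k+1) (dLm m (k+1) f) x =
      f x - (m : ℚ)⁻¹ * ∑ b : ZMod m, ∑ i : Fin (k+1),
        (-1 : ℚ) ^ (i : ℕ) * f (Fin.cons (b-1) (dl m k i x)) := by
    simp only [KavF]
    rw [Finset.sum_congr rfl fun b _ => step1 b, Finset.sum_sub_distrib, mul_sub]
    congr 1
    rw [Finset.sum_const, Finset.card_univ, ZMod.card, nsmul_eq_mul]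
    field_simp
  have step3 : ∑ b : ZMod m, ∑ i : Fin (k+1),
        (-1 : ℚ) ^ (i : ℕ) * f (Fin.cons (b-1) (dl m k i x)) =
      ∑ b : ZMod m, ∑ i : Fin (k+1),
        (-1 : ℚ) ^ (i : ℕ) * f (Fin.cons b (dl m k i x)) := by
    exact Fintype.sum_bijective (fun b => b - 1)
      (sub_left_injective.bijective_of_finite ) _ _ (fun b => rfl)
  have step4 : dLm m k (KavF m k f) x = (m : ℚ)⁻¹ * ∑ b : ZMod m, ∑ i : Fin (k+1),
        (-1 : ℚ) ^ (i : ℕ) * f (Fin.cons b (dl m k i x)) := by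
    simp only [dLm, KavF]
    rw [Finset.sum_comm, Finset.mul_sum]
    refine Finset.sum_congr rfl fun i _ => ?_
    simp only [Finset.mul_sum]
    exact Finset.sum_congr rfl fun b _ => by ring
  simp only [Pi.add_apply]
  rw [step2, step3, ← step4]
  ring

def PiF (m k : ℕ) (f : (Fin k → ZMod m) → ℚ) : (Fin k → ZMod m) → ℚ :=
  fun x => ∑ j ∈ Finset.range m, f fun i => x i + (j : ZMod m)

def EF (m k : ℕ) (f : (Fin k → ZMod m) → ℚ) : (Fin k → ZMod m) → ℚ :=
  fun x => ∑ j ∈ Finset.range m, (j : ℚ) * f fun i => x i + (j : ZMod m)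

def Jmap (m k : ℕ) : ((Fin k → ZMod m) → ℚ) →ₗ[ℚ] ((Fin (k + 1) → ZMod m) → ℚ) where
  toFun g := fun x => g fun i => x i.succ - x 0
  map_add' _ _ := rfl
  map_smul' _ _ := rfl

lemma dLm_trl (m k : ℕ) (f : (Fin k → ZMod m) → ℚ) :
    dLm m k (trl m k f) = trl m (k+1) (dLm m k f) := by
  funext x
  simp only [dLm, trl]
  exact Finset.sum_congr rfl fun i _ => by rw [dl_shift m k i x 1]

lemma PiF_dLm (m k : ℕ) (f : (Fin k → ZMod m) → ℚ) :
    PiF m (k+1) (dLm m k f) = dLm m k (PiF m k f) := by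
  funext x
  simp only [dLm, PiF]
  rw [Finset.sum_comm]
  refine Finset.sum_congr rfl fun i _ => ?_
  simp only [Finset.mul_sum]
  exact Finset.sum_congr rfl fun j _ => by rw [dl_shift m k i x (j : ZMod m)]

lemma EF_dLm (m k : ℕ) (f : (Fin k → ZMod m) → ℚ) :
    EF m (k+1) (dLm m k f) = dLm m k (EF m k f) := by
  funext x
  simp only [dLm, EF, Finset.mul_sum]
  rw [Finset.sum_comm]
  refine Finset.sum_congr rfl fun i _ => ?_
  exact Finset.sum_congr rfl fun j _ => by rw [dl_shift m k i x (j : ZMod m)]; ring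

lemma cyc_sum (m : ℕ) (g : ℕ → ℚ) (hg : g m = g 0) :
    ∑ j ∈ Finset.range m, g (j+1) = ∑ j ∈ Finset.range m, g j := by
  have h1 := Finset.sum_range_succ' g m
  have h2 := Finset.sum_range_succ g m
  rw [hg] at h2
  linarith

lemma cyc_sum_weighted (m : ℕ) (g : ℕ → ℚ) (hg : g m = g 0) :
    ∑ j ∈ Finset.range m, (j : ℚ) * g (j+1) =
      ∑ j ∈ Finset.range m, (j : ℚ) * g j + (m : ℚ) * g 0 - ∑ j ∈ Finset.range m, g j := by
  have hA : ∑ j ∈ Finset.range m, ((j : ℚ) + 1) * g (j+1) =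
      ∑ j ∈ Finset.range m, (j : ℚ) * g j + (m : ℚ) * g 0 := by
    have h1 := Finset.sum_range_succ' (fun j => (j : ℚ) * g j) m
    have h2 := Finset.sum_range_succ (fun j => (j : ℚ) * g j) m
    simp only [Nat.cast_zero, zero_mul, add_zero, Nat.cast_add, Nat.cast_one] at h1 h2
    rw [hg] at h2
    linarith
  have hB := cyc_sum m g hg
  have : ∑ j ∈ Finset.range m, (j : ℚ) * g (j+1) =
      ∑ j ∈ Finset.range m, (((j : ℚ) + 1) * g (j+1) - g (j+1)) :=
    Finset.sum_congr rfl fun j _ => by ring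
  rw [this, Finset.sum_sub_distrib, hA, hB]

lemma cast_shift (m k : ℕ) (x : Fin k → ZMod m) (j : ℕ) :
    (fun i => x i + ((j:ℕ)+1 : ℕ)) = fun i => (x i + (j : ZMod m)) + 1 := by
  funext i
  push_cast
  ring

lemma PiF_trl (m k : ℕ) (f : (Fin k → ZMod m) → ℚ) :
    PiF m k (trl m k f) = PiF m k f := by
  funext x
  simp only [PiF, trl]
  have := cyc_sum m (fun j => f fun i => x i + (j : ZMod m)) (by simp)
  rw [← this]
  exact Finset.sum_congr rfl fun j _ => by rw [← cast_shift m k x j]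

lemma trl_PiF (m k : ℕ) (f : (Fin k → ZMod m) → ℚ) :
    trl m k (PiF m k f) = PiF m k f := by
  rw [show trl m k (PiF m k f) = PiF m k (trl m k f) from ?_, PiF_trl]
  funext x
  simp only [PiF, trl]
  exact Finset.sum_congr rfl fun j _ => by
    congr 1; funext i; ring

lemma EF_trl (m k : ℕ) (f : (Fin k → ZMod m) → ℚ) :
    EF m k (trl m k f) = EF m k f + (m : ℚ) • f - PiF m k f := by
  funext x
  simp only [EF, trl, PiF, Pi.sub_apply, Pi.add_apply, Pi.smul_apply, smul_eq_mul]
  have := cyc_sum_weighted m (fun j => f fun i => x i + (j : ZMod m)) (by simp)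
  simp only [Nat.cast_zero, add_zero] at this
  rw [show (∑ j ∈ Finset.range m, (j:ℚ) * f fun i => (x i + (j:ZMod m)) + 1) =
      ∑ j ∈ Finset.range m, (j:ℚ) * f fun i => x i + (((j:ℕ)+1 : ℕ) : ZMod m) from
    Finset.sum_congr rfl fun j _ => by rw [cast_shift m k x j], this]

lemma trl_EF (m k : ℕ) (f : (Fin k → ZMod m) → ℚ) :
    trl m k (EF m k f) = EF m k (trl m k f) := by
  funext x
  simp only [EF, trl]
  exact Finset.sum_congr rfl fun j _ => by
    congr 2; funext i; ring

lemma cons_shift (m k : ℕ) (b a : ZMod m) (x : Fin k → ZMod m) :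
    (fun i => (Fin.cons b x : Fin (k+1) → ZMod m) i + a) =
      (Fin.cons (b + a) (fun i => x i + a) : Fin (k+1) → ZMod m) := by
  funext i
  induction i using Fin.cases with
  | zero => simp
  | succ p => simp

lemma zmod_sum_shift (m : ℕ) [NeZero m] (h : ZMod m → ℚ) (a : ZMod m) :
    ∑ b : ZMod m, h (b + a) = ∑ b : ZMod m, h b :=
  Fintype.sum_bijective _ (Equiv.addRight a).bijective _ _ (fun _ => rfl)

lemma KavF_trl (m : ℕ) [NeZero m] (k : ℕ) (f : (Fin (k+1) → ZMod m) → ℚ) :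
    KavF m k (trl m (k+1) f) = trl m k (KavF m k f) := by
  funext x
  simp only [KavF, trl]
  congr 1
  rw [Finset.sum_congr rfl fun b _ => congrArg f (cons_shift m k b 1 x)]
  exact zmod_sum_shift m (fun c => f (Fin.cons c (fun i => x i + 1))) 1

lemma PiF_sub (m k : ℕ) (f g : (Fin k → ZMod m) → ℚ) :
    PiF m k (f - g) = PiF m k f - PiF m k g := by
  funext x
  simp [PiF, Finset.sum_sub_distrib]

lemma EF_sub (m k : ℕ) (f g : (Fin k → ZMod m) → ℚ) :
    EF m k (f - g) = EF m k f - EF m k g := by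
  funext x
  simp [EF, mul_sub, Finset.sum_sub_distrib]

lemma KavF_sub (m : ℕ) [NeZero m] (k : ℕ) (f g : (Fin (k+1) → ZMod m) → ℚ) :
    KavF m k (f - g) = KavF m k f - KavF m k g := by
  funext x
  simp [KavF, Finset.sum_sub_distrib, mul_sub]

lemma dLm_zero (m k : ℕ) : dLm m k (0 : (Fin k → ZMod m) → ℚ) = 0 := by
  funext x
  simp [dLm]

lemma trl_iter (m k : ℕ) (f : (Fin k → ZMod m) → ℚ) (h : trl m k f = f) :
    ∀ (j : ℕ) (x : Fin k → ZMod m), f (fun i => x i + (j : ZMod m)) = f x := by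
  intro j
  induction j with
  | zero => intro x; simp
  | succ j ih =>
    intro x
    rw [show (fun i => x i + ((j+1 : ℕ) : ZMod m)) = fun i => (x i + (j : ZMod m)) + 1 from
      cast_shift m k x j]
    have := congrFun h (fun i => x i + (j : ZMod m))
    simp only [trl] at this
    rw [this, ih x]

lemma inv_all (m : ℕ) [NeZero m] (k : ℕ) (f : (Fin k → ZMod m) → ℚ) (h : trl m k f = f) (a : ZMod m)
    (x : Fin k → ZMod m) : f (fun i => x i + a) = f x := by
  have := trl_iter m k f h a.val x
  rwa [ZMod.natCast_val, ZMod.cast_id] at this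

lemma PiF_of_inv (m k : ℕ) (f : (Fin k → ZMod m) → ℚ) (h : trl m k f = f) :
    PiF m k f = (m : ℚ) • f := by
  funext x
  simp only [PiF, Pi.smul_apply, smul_eq_mul]
  rw [Finset.sum_congr rfl fun j _ => trl_iter m k f h j x]
  simp

lemma trl_J (m k : ℕ) (g : (Fin k → ZMod m) → ℚ) :
    trl m (k+1) (Jmap m k g) = Jmap m k g := by
  funext x
  simp only [trl, Jmap, LinearMap.coe_mk, AddHom.coe_mk]
  congr 1
  funext i
  ring

lemma J_inj (m k : ℕ) : Function.Injective (Jmap m k) := by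
  intro g g' h
  funext y
  have := congrFun h (Fin.cons 0 y)
  simpa [Jmap] using this

lemma mem_range_J (m : ℕ) [NeZero m] (k : ℕ) (f : (Fin (k+1) → ZMod m) → ℚ) (h : trl m (k+1) f = f) :
    f ∈ LinearMap.range (Jmap m k) := by
  refine ⟨fun y => f (Fin.cons 0 y), ?_⟩
  funext x
  show f (Fin.cons 0 fun i => x i.succ - x 0) = f x
  have h2 := inv_all m (k+1) f h (- x 0) x
  have e : (fun i => x i + (- x 0)) =
      (Fin.cons (0 : ZMod m) (fun i => x i.succ - x 0) : Fin (k+1) → ZMod m) := by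
    funext i
    refine Fin.cases ?_ (fun p => ?_) i
    · simp
    · simp [Fin.cons_succ]; ring
  rw [← e, h2]

end AuxYB

lemma deltaLin_apply (m n : ℕ) (f : (Fin n → ZMod m) → ℚ) :
    deltaLin m n f = delta m n f := rfl

lemma trl_smul (m k : ℕ) (c : ℚ) (f : (Fin k → ZMod m) → ℚ) :
    trl m k (c • f) = c • trl m k f := rfl

lemma dLm_sub (m k : ℕ) (f g : (Fin k → ZMod m) → ℚ) :
    dLm m k (f - g) = dLm m k f - dLm m k g := by
  funext x
  simp [dLm, mul_sub, Finset.sum_sub_distrib]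

lemma KavF_zero (m : ℕ) [NeZero m] (k : ℕ) :
    KavF m k (0 : (Fin (k+1) → ZMod m) → ℚ) = 0 := by
  funext x
  simp [KavF]

lemma delta_delta (m k : ℕ) (f : (Fin k → ZMod m) → ℚ) :
    delta m (k+1) (delta m k f) = 0 := by
  rw [delta_eq_dLm m (k+1), delta_eq_dLm m k, ← dLm_trl, ← dLm_sub, dLm_dLm]

lemma delta_EF (m k : ℕ) (h : (Fin k → ZMod m) → ℚ) :
    delta m k (EF m k h) = EF m (k+1) (delta m k h) := by
  rw [delta_eq_dLm, delta_eq_dLm, trl_EF, ← EF_sub, EF_dLm]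

lemma delta_KavF (m : ℕ) [NeZero m] (k : ℕ) (f : (Fin (k+1) → ZMod m) → ℚ)
    (hf : delta m (k+1) f = 0) :
    delta m k (KavF m k f) = f - trl m (k+1) f := by
  have hg : dLm m (k+1) (f - trl m (k+1) f) = 0 := by
    rw [← delta_eq_dLm]; exact hf
  have hhom := homotopy m k (f - trl m (k+1) f)
  rw [hg, KavF_zero, add_zero] at hhom
  rw [delta_eq_dLm, ← KavF_trl, ← KavF_sub, hhom]

lemma PiF_delta (m k : ℕ) (w : (Fin k → ZMod m) → ℚ) :
    PiF m (k+1) (delta m k w) = 0 := by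
  rw [delta_eq_dLm, PiF_dLm, PiF_sub, PiF_trl, sub_self, dLm_zero]

set_option maxHeartbeats 1000000 in
set_option synthInstance.maxHeartbeats 200000 in
/-- for the cyclic biquandle `C_m`, the `n`-th Betti number is `m^{n−1}`:
`dim_ℚ H^n_{YB}(C_m;ℚ) = dim_ℚ (ker δⁿ / im δ^{n−1}) = m^{n−1}`.
(The degree `n ≥ 1` is realized as `n+1` with `n : ℕ` arbitrary, so the claim reads
`dim H^{n+1} = m^n`.) -/
theorem betti_number_cyclic_biquandle (m n : ℕ) (hm : 1 ≤ m) :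
    Module.finrank ℚ
      (↥(LinearMap.ker (deltaLin m (n + 1))) ⧸
        Submodule.comap (LinearMap.ker (deltaLin m (n + 1))).subtype
          (LinearMap.range (deltaLin m n))) = m ^ n := by
  haveI : NeZero m := ⟨by omega⟩
  have hmQ : (m : ℚ) ≠ 0 := Nat.cast_ne_zero.mpr (NeZero.ne m)
  set K : Submodule ℚ ((Fin (n+1) → ZMod m) → ℚ) := LinearMap.range (Jmap m n) with hK
  -- range δₙ ⊆ ker δₙ₊₁
  have hle : LinearMap.range (deltaLin m n) ≤ LinearMap.ker (deltaLin m (n+1)) := by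
    rintro f ⟨w, rfl⟩
    rw [LinearMap.mem_ker, deltaLin_apply, deltaLin_apply, delta_delta]
  -- K ⊆ ker δₙ₊₁
  have hKle : K ≤ LinearMap.ker (deltaLin m (n+1)) := by
    rintro f ⟨g, rfl⟩
    rw [LinearMap.mem_ker, deltaLin_apply, delta_eq_dLm, trl_J, sub_self, dLm_zero]
  -- ker ≤ K ⊔ range
  have hker_le : LinearMap.ker (deltaLin m (n+1)) ≤ K ⊔ LinearMap.range (deltaLin m n) := by
    intro f hf
    rw [LinearMap.mem_ker, deltaLin_apply] at hf
    set pf := (m : ℚ)⁻¹ • PiF m (n+1) f with hpf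
    have hpfK : pf ∈ K := by
      apply mem_range_J
      rw [hpf, trl_smul, trl_PiF]
    have hEg : EF m (n+1) (f - trl m (n+1) f) = PiF m (n+1) f - (m : ℚ) • f := by
      rw [EF_sub, EF_trl]
      abel
    have hdw : delta m n ((-(m:ℚ)⁻¹) • EF m n (KavF m n f)) = f - pf := by
      rw [← deltaLin_apply, map_smul, deltaLin_apply, delta_EF, delta_KavF m n f hf, hEg]
      funext x
      simp only [Pi.smul_apply, Pi.sub_apply, smul_eq_mul, hpf]
      field_simp
      ring
    have : f = pf + delta m n ((-(m:ℚ)⁻¹) • EF m n (KavF m n f)) := by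
      rw [hdw]; abel
    rw [this]
    exact Submodule.add_mem_sup hpfK ⟨_, rfl⟩
  have hker : LinearMap.ker (deltaLin m (n+1)) = K ⊔ LinearMap.range (deltaLin m n) :=
    le_antisymm hker_le (sup_le hKle hle)
  -- disjointness
  have hinf : K ⊓ LinearMap.range (deltaLin m n) = ⊥ := by
    rw [Submodule.eq_bot_iff]
    rintro f ⟨⟨g, rfl⟩, ⟨w, hw⟩⟩
    have h1 : PiF m (n+1) (Jmap m n g) = (m : ℚ) • Jmap m n g :=
      PiF_of_inv m (n+1) _ (trl_J m n g)
    have h2 : PiF m (n+1) (Jmap m n g) = 0 := by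
      rw [← hw, deltaLin_apply, PiF_delta]
    rw [h2] at h1
    have := h1.symm
    rwa [smul_eq_zero_iff_right hmQ] at this
  -- dimensions
  have hKdim : Module.finrank ℚ ↥K = m ^ n := by
    rw [hK, LinearMap.finrank_range_of_inj (J_inj m n), Module.finrank_pi]
    simp [ZMod.card]
  have e1 := Submodule.finrank_quotient_add_finrank
    (Submodule.comap (LinearMap.ker (deltaLin m (n+1))).subtype
      (LinearMap.range (deltaLin m n)))
  have e2 : Module.finrank ℚ ↥(Submodule.comap (LinearMap.ker (deltaLin m (n+1))).subtype
      (LinearMap.range (deltaLin m n))) = Module.finrank ℚ ↥(LinearMap.range (deltaLin m n)) :=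
    (Submodule.comapSubtypeEquivOfLe hle).finrank_eq
  have e3 : Module.finrank ℚ ↥(LinearMap.ker (deltaLin m (n+1))) =
      m ^ n + Module.finrank ℚ ↥(LinearMap.range (deltaLin m n)) := by
    have e4 := Submodule.finrank_sup_add_finrank_inf_eq K (LinearMap.range (deltaLin m n))
    rw [hinf] at e4
    simp only [finrank_bot, add_zero] at e4
    rw [hker, e4, hKdim]
  rw [e3, e2] at e1
  omega
end

section
/- Let m ≥ 2 and n ≥ 1. The coboundary δ of the rational Yang–Baxter cochain complex of the cyclic biquandle C_m maps normalized cochains to normalized cochains, and the n-th normalized set-theoretic Yang–Baxter cohomology of C_m with ℚ coefficients, i.e. the quotient (ker δ^n ∩ N^n) / δ^{n−1}(N^{n−1}), has ℚ-dimension (m−1)^{n−1}. -/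
/-- A tuple `(x₁,…,x_k)` in `(ℤ/m)^k` is degenerate if `x_i = x_{i+1} + 1` for some pair of
consecutive indices (these are the fixed points of the Yang–Baxter operator
`R(a,b) = (b+1, a−1)`). -/
def IsDeg (m k : ℕ) (x : Fin k → ZMod m) : Prop :=
  ∃ i j : Fin k, (j : ℕ) = (i : ℕ) + 1 ∧ x i = x j + 1

/-- The subspace `N^k` of normalized `k`-cochains (rational coefficients): the functions
vanishing on all degenerate tuples. -/
def Nsub (m k : ℕ) : Submodule ℚ ((Fin k → ZMod m) → ℚ) where
  carrier := {f | ∀ x, IsDeg m k x → f x = 0}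
  add_mem' := by
    intro f g hf hg x hx
    simp [Pi.add_apply, hf x hx, hg x hx]
  zero_mem' := by intro x hx; rfl
  smul_mem' := by
    intro c f hf x hx
    simp [Pi.smul_apply, hf x hx]

------------------------------------------------------------------------
-- auxiliary development
------------------------------------------------------------------------
namespace YB
open Finset

noncomputable section

abbrev C (m k : ℕ) := (Fin k → ZMod m) → ℚ

def Sl (m k : ℕ) : Module.End ℚ (C m k) where
  toFun f := fun x => f fun j => x j - 1
  map_add' _ _ := rfl
  map_smul' _ _ := rfl

@[simp] lemma Sl_apply (m k : ℕ) (f : C m k) (x : Fin k → ZMod m) :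
    Sl m k f x = f (fun j => x j - 1) := rfl

def Dl (m k : ℕ) : C m k →ₗ[ℚ] C m (k + 1) where
  toFun f := fun x => ∑ i : Fin (k + 1), (-1 : ℚ) ^ (i : ℕ) * f (dr m k i x)
  map_add' f g := by
    funext x
    simp only [Pi.add_apply, mul_add]
    rw [← Finset.sum_add_distrib]
  map_smul' c f := by
    funext x
    simp only [Pi.smul_apply, smul_eq_mul, RingHom.id_apply, Finset.mul_sum]
    exact Finset.sum_congr rfl fun i _ => by ring

@[simp] lemma Dl_apply (m k : ℕ) (f : C m k) (x) :
    Dl m k f x = ∑ i : Fin (k + 1), (-1 : ℚ) ^ (i : ℕ) * f (dr m k i x) := rfl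

lemma delta_eq (m k : ℕ) (f : C m k) :
    deltaLin m k f = Dl m k (Sl m k f - f) := by
  funext x
  show delta m k f x = _
  simp only [delta, Dl_apply, Pi.sub_apply, Sl_apply]
  refine Finset.sum_congr rfl fun i _ => ?_
  have hdl : dl m k i x = fun j => dr m k i x j - 1 := by
    funext j; simp only [dl, dr]; split_ifs <;> ring
  rw [hdl, zsmul_eq_mul]
  push_cast
  ring

lemma Dl_Sl (m k : ℕ) (f : C m k) :
    Dl m k (Sl m k f) = Sl m (k + 1) (Dl m k f) := by
  funext x
  simp only [Dl_apply, Sl_apply]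
  refine Finset.sum_congr rfl fun i _ => ?_
  congr 2
  funext j; simp only [dr]; split_ifs <;> ring

lemma delta_eq' (m k : ℕ) (f : C m k) :
    deltaLin m k f = Sl m (k + 1) (Dl m k f) - Dl m k f := by
  rw [delta_eq, map_sub, Dl_Sl]

lemma Dl_Sl_pow (m k t : ℕ) (f : C m k) :
    Dl m k ((Sl m k ^ t) f) = (Sl m (k + 1) ^ t) (Dl m k f) := by
  induction t with
  | zero => simp
  | succ t ih =>
      rw [pow_succ', pow_succ', Module.End.mul_apply, Module.End.mul_apply,
        Dl_Sl, ih]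

lemma Sl_pow_apply (m k t : ℕ) (f : C m k) (x : Fin k → ZMod m) :
    ((Sl m k) ^ t) f x = f (fun j => x j - (t : ZMod m)) := by
  induction t generalizing x with
  | zero =>
      have : (fun j => x j - ((0 : ℕ) : ZMod m)) = x := by funext j; simp
      simp [this]
  | succ t ih =>
      rw [pow_succ', Module.End.mul_apply, Sl_apply, ih]
      congr 1
      funext j
      push_cast
      ring

lemma Sl_pow_card (m k : ℕ) : (Sl m k) ^ m = 1 := by
  refine LinearMap.ext fun f => funext fun x => ?_
  rw [Sl_pow_apply, ZMod.natCast_self]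
  show f _ = f x
  congr 1
  funext j
  simp


lemma Sl_mem (m k : ℕ) (f : C m k) (hf : f ∈ Nsub m k) : Sl m k f ∈ Nsub m k := by
  rintro x ⟨i, j, hji, hij⟩
  refine hf _ ⟨i, j, hji, ?_⟩
  show x i - 1 = (x j - 1) + 1
  rw [hij]; ring

lemma Sl_pow_mem (m k t : ℕ) (f : C m k) (hf : f ∈ Nsub m k) :
    ((Sl m k) ^ t) f ∈ Nsub m k := by
  induction t with
  | zero => simpa using hf
  | succ t ih =>
      rw [pow_succ', Module.End.mul_apply]
      exact Sl_mem m k _ ih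

def Pop (m k : ℕ) : Module.End ℚ (C m k) :=
  (m : ℚ)⁻¹ • ∑ t ∈ range m, (Sl m k) ^ t

def Top (m k : ℕ) : Module.End ℚ (C m k) :=
  (m : ℚ)⁻¹ • ∑ t ∈ range m, ∑ s ∈ range t, (Sl m k) ^ s

lemma sum_pow_shift (m k : ℕ) :
    ∑ t ∈ range m, (Sl m k) ^ (t + 1) = ∑ t ∈ range m, (Sl m k) ^ t := by
  have h1 := Finset.sum_range_succ (fun t => (Sl m k) ^ t) m
  have h2 := Finset.sum_range_succ' (fun t => (Sl m k) ^ t) m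
  rw [h1] at h2
  rw [Sl_pow_card m k] at h2
  rw [pow_zero] at h2
  exact (add_right_cancel h2).symm

lemma Sl_mul_Pop (m k : ℕ) : Sl m k * Pop m k = Pop m k := by
  unfold Pop
  rw [mul_smul_comm, Finset.mul_sum]
  congr 1
  have : ∀ t ∈ range m, Sl m k * Sl m k ^ t = Sl m k ^ (t + 1) :=
    fun t _ => (pow_succ' _ _).symm
  rw [Finset.sum_congr rfl this, sum_pow_shift]

lemma Pop_mul_Sl (m k : ℕ) : Pop m k * Sl m k = Pop m k := by
  unfold Pop
  rw [smul_mul_assoc, Finset.sum_mul]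
  have : ∀ t ∈ range m, Sl m k ^ t * Sl m k = Sl m k ^ (t + 1) :=
    fun t _ => (pow_succ _ _).symm
  rw [Finset.sum_congr rfl this, sum_pow_shift]


lemma Pop_mul_sub (m k : ℕ) : Pop m k * (Sl m k - 1) = 0 := by
  rw [mul_sub, mul_one, Pop_mul_Sl, sub_self]

lemma Sl_pow_fixed (m k : ℕ) (f : C m k) (hf : Sl m k f = f) (t : ℕ) :
    ((Sl m k) ^ t) f = f := by
  induction t with
  | zero => simp
  | succ t ih => rw [pow_succ, Module.End.mul_apply, hf, ih]

lemma Pop_fixed (m k : ℕ) (hm : m ≠ 0) (f : C m k) (hf : Sl m k f = f) :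
    Pop m k f = f := by
  unfold Pop
  rw [LinearMap.smul_apply, LinearMap.sum_apply]
  rw [Finset.sum_congr rfl fun t _ => Sl_pow_fixed m k f hf t]
  rw [Finset.sum_const, Finset.card_range, ← Nat.cast_smul_eq_nsmul ℚ, smul_smul,
    inv_mul_cancel₀ (Nat.cast_ne_zero.mpr hm), one_smul]

lemma Spow_mul_Pop (m k t : ℕ) : (Sl m k) ^ t * Pop m k = Pop m k := by
  induction t with
  | zero => rw [pow_zero, one_mul]
  | succ t ih => rw [pow_succ', mul_assoc, ih, Sl_mul_Pop]

lemma Pop_mul_Pop (m k : ℕ) (hm : m ≠ 0) : Pop m k * Pop m k = Pop m k := by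
  nth_rewrite 1 [Pop]
  rw [smul_mul_assoc, Finset.sum_mul]
  rw [Finset.sum_congr rfl fun t _ => Spow_mul_Pop m k t]
  rw [Finset.sum_const, Finset.card_range, ← Nat.cast_smul_eq_nsmul ℚ, smul_smul,
    inv_mul_cancel₀ (Nat.cast_ne_zero.mpr hm), one_smul]

lemma one_sub_Pop (m k : ℕ) (hm : m ≠ 0) :
    (1 : Module.End ℚ (C m k)) - Pop m k = (1 - Sl m k) * Top m k := by
  unfold Pop Top
  rw [mul_smul_comm, Finset.mul_sum]
  have hgeom : ∀ t ∈ range m,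
      (1 - Sl m k) * (∑ s ∈ range t, (Sl m k) ^ s) = 1 - (Sl m k) ^ t := by
    intro t _
    have h := mul_geom_sum (Sl m k) t
    have h2 : (1 - Sl m k) * (∑ s ∈ range t, (Sl m k) ^ s)
        = -((Sl m k - 1) * ∑ s ∈ range t, (Sl m k) ^ s) := by
      rw [sub_mul, one_mul, sub_mul, one_mul, neg_sub]
    rw [h2, h, neg_sub]
  rw [Finset.sum_congr rfl hgeom, Finset.sum_sub_distrib, Finset.sum_const,
    Finset.card_range, smul_sub, ← Nat.cast_smul_eq_nsmul ℚ, smul_smul,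
    inv_mul_cancel₀ (Nat.cast_ne_zero.mpr hm), one_smul]

lemma ker_sq (m k : ℕ) (hm : m ≠ 0) (u : C m k)
    (h : (Sl m k - 1) ((Sl m k - 1) u) = 0) : (Sl m k - 1) u = 0 := by
  set v := (Sl m k - 1) u with hv
  have hfix : Sl m k v = v := by
    have h' := h
    rw [LinearMap.sub_apply, Module.End.one_apply, sub_eq_zero] at h'
    exact h'
  have h1 : Pop m k v = v := Pop_fixed m k hm v hfix
  have h2 : Pop m k v = 0 := by
    have h3 := congrArg (fun L : Module.End ℚ (C m k) => L u) (Pop_mul_sub m k)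
    simp only [Module.End.mul_apply, LinearMap.zero_apply] at h3
    rw [hv]; exact h3
  rw [← h1, h2]

lemma Pop_mem (m k : ℕ) (f : C m k) (hf : f ∈ Nsub m k) : Pop m k f ∈ Nsub m k := by
  unfold Pop
  rw [LinearMap.smul_apply, LinearMap.sum_apply]
  exact Submodule.smul_mem _ _ (Submodule.sum_mem _ fun t _ => Sl_pow_mem m k t f hf)

lemma Top_mem (m k : ℕ) (f : C m k) (hf : f ∈ Nsub m k) : Top m k f ∈ Nsub m k := by
  unfold Top
  rw [LinearMap.smul_apply, LinearMap.sum_apply]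
  refine Submodule.smul_mem _ _ (Submodule.sum_mem _ fun t _ => ?_)
  rw [LinearMap.sum_apply]
  exact Submodule.sum_mem _ fun s _ => Sl_pow_mem m k s f hf

lemma Dl_Pop (m k : ℕ) (f : C m k) :
    Dl m k (Pop m k f) = Pop m (k + 1) (Dl m k f) := by
  unfold Pop
  rw [LinearMap.smul_apply, LinearMap.sum_apply, map_smul, map_sum,
    LinearMap.smul_apply, LinearMap.sum_apply]
  congr 1
  exact Finset.sum_congr rfl fun t _ => Dl_Sl_pow m k t f

lemma Dl_Top (m k : ℕ) (f : C m k) :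
    Dl m k (Top m k f) = Top m (k + 1) (Dl m k f) := by
  unfold Top
  rw [LinearMap.smul_apply, LinearMap.sum_apply, map_smul, map_sum,
    LinearMap.smul_apply, LinearMap.sum_apply]
  congr 1
  refine Finset.sum_congr rfl fun t _ => ?_
  rw [LinearMap.sum_apply, map_sum, LinearMap.sum_apply]
  exact Finset.sum_congr rfl fun s _ => Dl_Sl_pow m k s f


lemma Dl_mem (m k : ℕ) (f : C m k) (hf : f ∈ Nsub m k) :
    Dl m k f ∈ Nsub m (k + 1) := by
  rintro x ⟨i, j, hji, hij⟩
  have hjk : (i : ℕ) + 1 ≤ k := by have := j.isLt; omega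
  have hkey : dr m k i x = dr m k j x := by
    funext a
    simp only [dr, hji]
    by_cases h1 : (a : ℕ) < (i : ℕ)
    · rw [if_pos h1, if_pos (by omega)]
    · by_cases h2 : (a : ℕ) < (i : ℕ) + 1
      · rw [if_neg h1, if_pos h2]
        have ha : (a : ℕ) = (i : ℕ) := by omega
        have e1 : a.succ = j := Fin.ext (by rw [Fin.val_succ, ha, hji])
        have e2 : a.castSucc = i := Fin.ext (by rw [Fin.coe_castSucc, ha])
        rw [e1, e2, hij]
      · rw [if_neg h1, if_neg (by omega)]
  have hzero : ∀ t : Fin (k + 1), t ∉ ({i, j} : Finset (Fin (k + 1))) →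
      f (dr m k t x) = 0 := by
    intro t ht
    simp only [Finset.mem_insert, Finset.mem_singleton] at ht
    push_neg at ht
    obtain ⟨ht1, ht2⟩ := ht
    have hti : (t : ℕ) ≠ (i : ℕ) := fun h => ht1 (Fin.ext h)
    have htj : (t : ℕ) ≠ (i : ℕ) + 1 := fun h => ht2 (Fin.ext (by rw [h, hji]))
    apply hf
    by_cases hc : (t : ℕ) < (i : ℕ)
    · have hb1 : (i : ℕ) - 1 < k := by omega
      have hb2 : (i : ℕ) < k := by omega
      refine ⟨⟨(i : ℕ) - 1, hb1⟩, ⟨(i : ℕ), hb2⟩,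
        show (i : ℕ) = (i : ℕ) - 1 + 1 by omega, ?_⟩
      show dr m k t x ⟨(i : ℕ) - 1, hb1⟩ = dr m k t x ⟨(i : ℕ), hb2⟩ + 1
      simp only [dr]
      rw [if_neg (show ¬((i : ℕ) - 1 < (t : ℕ)) by omega),
        if_neg (show ¬((i : ℕ) < (t : ℕ)) by omega)]
      have e1 : (⟨(i : ℕ) - 1, hb1⟩ : Fin k).succ = i :=
        Fin.ext (show (i : ℕ) - 1 + 1 = (i : ℕ) by omega)
      have e2 : (⟨(i : ℕ), hb2⟩ : Fin k).succ = j :=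
        Fin.ext (show (i : ℕ) + 1 = (j : ℕ) by omega)
      rw [e1, e2, hij]
    · have hc2 : (i : ℕ) + 2 ≤ (t : ℕ) := by omega
      have hb2 : (i : ℕ) + 1 < k := by have := t.isLt; omega
      have hb1 : (i : ℕ) < k := by omega
      refine ⟨⟨(i : ℕ), hb1⟩, ⟨(i : ℕ) + 1, hb2⟩, rfl, ?_⟩
      show dr m k t x ⟨(i : ℕ), hb1⟩ = dr m k t x ⟨(i : ℕ) + 1, hb2⟩ + 1
      simp only [dr]
      rw [if_pos (show (i : ℕ) < (t : ℕ) by omega),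
        if_pos (show (i : ℕ) + 1 < (t : ℕ) by omega)]
      have e1 : (⟨(i : ℕ), hb1⟩ : Fin k).castSucc = i := Fin.ext rfl
      have e2 : (⟨(i : ℕ) + 1, hb2⟩ : Fin k).castSucc = j :=
        Fin.ext (show (i : ℕ) + 1 = (j : ℕ) by omega)
      rw [e1, e2, hij]
  show ∑ t : Fin (k + 1), (-1 : ℚ) ^ (t : ℕ) * f (dr m k t x) = 0
  rw [← Finset.sum_subset (Finset.subset_univ ({i, j} : Finset (Fin (k + 1))))
    (fun t _ ht => by rw [hzero t ht, mul_zero])]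
  have hij' : i ≠ j := Fin.ne_of_val_ne (by omega)
  rw [Finset.sum_pair hij', hkey, hji, pow_succ]
  ring

def Hmap (m k : ℕ) : C m (k + 1) →ₗ[ℚ] C m k where
  toFun f := fun x => f (Fin.cons 0 x)
  map_add' _ _ := rfl
  map_smul' _ _ := rfl

@[simp] lemma Hmap_apply (m k : ℕ) (f : C m (k + 1)) (x : Fin k → ZMod m) :
    Hmap m k f x = f (Fin.cons 0 x) := rfl

lemma Hmap_mem (m k : ℕ) (f : C m (k + 1)) (hf : f ∈ Nsub m (k + 1)) :
    Hmap m k f ∈ Nsub m k := by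
  rintro x ⟨i, j, hji, hij⟩
  refine hf _ ⟨i.succ, j.succ, by simp [hji], ?_⟩
  simpa [Fin.cons_succ] using hij

lemma homotopy (m k : ℕ) (f : C m (k + 1)) (x : Fin (k + 1) → ZMod m) :
    Hmap m (k + 1) (Dl m (k + 1) f) x + Dl m k (Hmap m k f) x
      = f (fun j => x j + 1) := by
  have hc0 : dr m (k + 1) 0 (Fin.cons 0 x) = fun j => x j + 1 := by
    funext j
    simp [dr, Fin.cons_succ]
  have hcs : ∀ s : Fin (k + 1),
      dr m (k + 1) s.succ (Fin.cons 0 x) = Fin.cons 0 (dr m k s x) := by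
    intro s
    funext j
    refine Fin.cases ?_ (fun u => ?_) j
    · simp [dr]
    · simp only [dr, Fin.val_succ, Fin.cons_succ]
      by_cases h : (u : ℕ) < (s : ℕ)
      · rw [if_pos (by omega), if_pos h, ← Fin.succ_castSucc, Fin.cons_succ]
      · rw [if_neg (by omega), if_neg h]
  have lhs1 : Hmap m (k + 1) (Dl m (k + 1) f) x
      = f (fun j => x j + 1)
        + ∑ s : Fin (k + 1), (-1 : ℚ) ^ ((s : ℕ) + 1) * Hmap m k f (dr m k s x) := by
    rw [Hmap_apply, Dl_apply, Fin.sum_univ_succ]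
    simp only [hc0, hcs, Fin.val_zero, pow_zero, one_mul, Fin.val_succ, Hmap_apply]
  rw [lhs1, Dl_apply, add_assoc, ← Finset.sum_add_distrib]
  have hz : ∀ s : Fin (k + 1),
      (-1 : ℚ) ^ ((s : ℕ) + 1) * Hmap m k f (dr m k s x)
        + (-1 : ℚ) ^ (s : ℕ) * Hmap m k f (dr m k s x) = 0 := by
    intro s; rw [pow_succ]; ring
  rw [Finset.sum_congr rfl fun s _ => hz s, Finset.sum_const_zero, add_zero]


def diffF (m n : ℕ) (x : Fin (n + 1) → ZMod m) : Fin n → ZMod m :=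
  fun j => x j.castSucc - x j.succ

def repF (m n : ℕ) (y : Fin n → ZMod m) : Fin (n + 1) → ZMod m :=
  fun i => -∑ j ∈ range (i : ℕ), (if h : j < n then y ⟨j, h⟩ else 0)

lemma diffF_rep (m n : ℕ) (y : Fin n → ZMod m) : diffF m n (repF m n y) = y := by
  funext j
  simp only [diffF, repF, Fin.coe_castSucc, Fin.val_succ, Finset.sum_range_succ,
    dif_pos j.isLt]
  have : (⟨(j : ℕ), j.isLt⟩ : Fin n) = j := rfl
  rw [this]
  ring

lemma repF_diff (m n : ℕ) (x : Fin (n + 1) → ZMod m) :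
    repF m n (diffF m n x) = fun i => x i - x 0 := by
  have haux : ∀ t (h : t < n + 1),
      ∑ j ∈ range t, (if h' : j < n then diffF m n x ⟨j, h'⟩ else 0)
        = x 0 - x ⟨t, h⟩ := by
    intro t
    induction t with
    | zero =>
        intro h
        simp only [Finset.range_zero, Finset.sum_empty]
        have : (⟨0, h⟩ : Fin (n + 1)) = 0 := rfl
        rw [this, sub_self]
    | succ t ih =>
        intro h
        have ht : t < n := by omega
        rw [Finset.sum_range_succ, ih (by omega), dif_pos ht]
        have e1 : (⟨t, ht⟩ : Fin n).castSucc = ⟨t, by omega⟩ := rfl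
        have e2 : (⟨t, ht⟩ : Fin n).succ = ⟨t + 1, h⟩ := rfl
        simp only [diffF, e1, e2]
        ring
  funext i
  show -∑ j ∈ range (i : ℕ), _ = _
  rw [haux (i : ℕ) i.isLt]
  have : (⟨(i : ℕ), i.isLt⟩ : Fin (n + 1)) = i := rfl
  rw [this]
  ring

lemma isDeg_iff (m k : ℕ) (x : Fin (k + 1) → ZMod m) :
    IsDeg m (k + 1) x ↔ ∃ j : Fin k, x j.castSucc = x j.succ + 1 := by
  constructor
  · rintro ⟨i, j, hji, hij⟩
    have hik : (i : ℕ) < k := by have := j.isLt; omega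
    refine ⟨⟨(i : ℕ), hik⟩, ?_⟩
    have e1 : (⟨(i : ℕ), hik⟩ : Fin k).castSucc = i := Fin.ext rfl
    have e2 : (⟨(i : ℕ), hik⟩ : Fin k).succ = j :=
      Fin.ext (show (i : ℕ) + 1 = (j : ℕ) by omega)
    rw [e1, e2]; exact hij
  · rintro ⟨j, hj⟩
    exact ⟨j.castSucc, j.succ, by simp, hj⟩

lemma shift_inv (m k : ℕ) [NeZero m] (f : C m k) (hf : Sl m k f = f)
    (x : Fin k → ZMod m) (c : ZMod m) : f (fun j => x j - c) = f x := by
  have hnat : ∀ (t : ℕ) (x : Fin k → ZMod m),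
      f (fun j => x j - (t : ZMod m)) = f x := by
    intro t
    induction t with
    | zero => intro x; simp
    | succ t ih =>
        intro x
        have h1 : (fun j => x j - ((t + 1 : ℕ) : ZMod m))
            = fun j => (x j - 1) - (t : ZMod m) := by
          funext j; push_cast; ring
        rw [h1, ih fun j => x j - 1]
        exact congrFun hf x
  have := hnat c.val x
  rwa [ZMod.natCast_val, ZMod.cast_id] at this


def Phi (m n : ℕ) : C m (n + 1) →ₗ[ℚ] ((Fin n → {z : ZMod m // z ≠ 1}) → ℚ) where
  toFun f := fun y => f (repF m n fun j => (y j : ZMod m))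
  map_add' _ _ := rfl
  map_smul' _ _ := rfl

open Classical in
def Psi (m n : ℕ) : ((Fin n → {z : ZMod m // z ≠ 1}) → ℚ) →ₗ[ℚ] C m (n + 1) where
  toFun g := fun x =>
    if h : ∀ j, diffF m n x j ≠ 1 then g (fun j => ⟨diffF m n x j, h j⟩) else 0
  map_add' g₁ g₂ := by
    funext x
    by_cases h : ∀ j, diffF m n x j ≠ 1 <;> simp [h]
  map_smul' c g := by
    funext x
    by_cases h : ∀ j, diffF m n x j ≠ 1 <;> simp [h]

open Classical in
@[simp] lemma Psi_apply (m n : ℕ) (g) (x) :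
    Psi m n g x =
      if h : ∀ j, diffF m n x j ≠ 1 then g (fun j => ⟨diffF m n x j, h j⟩) else 0 := rfl

lemma Psi_mem (m n : ℕ) (g : (Fin n → {z : ZMod m // z ≠ 1}) → ℚ) :
    Psi m n g ∈ LinearMap.ker (Sl m (n + 1) - 1) ⊓ Nsub m (n + 1) := by
  constructor
  · show (Sl m (n + 1) - 1) (Psi m n g) = 0
    rw [LinearMap.sub_apply, Module.End.one_apply, sub_eq_zero]
    funext x
    have hd : diffF m n (fun j => x j - 1) = diffF m n x := by
      funext j; simp only [diffF]; ring
    show Psi m n g (fun j => x j - 1) = Psi m n g x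
    by_cases h : ∀ j, diffF m n x j ≠ 1
    · have h1 : ∀ j, diffF m n (fun j' => x j' - 1) j ≠ 1 := by
        intro j; rw [congrFun hd j]; exact h j
      rw [Psi_apply, Psi_apply, dif_pos h1, dif_pos h]
      congr 1
      funext j
      exact Subtype.ext (congrFun hd j)
    · have h1 : ¬ ∀ j, diffF m n (fun j' => x j' - 1) j ≠ 1 := by
        intro h1; exact h fun j => by rw [← congrFun hd j]; exact h1 j
      rw [Psi_apply, Psi_apply, dif_neg h1, dif_neg h]
  · intro x hx
    rw [isDeg_iff] at hx
    obtain ⟨j, hj⟩ := hx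
    have h : ¬ ∀ j', diffF m n x j' ≠ 1 := by
      push_neg
      exact ⟨j, by rw [diffF, hj]; ring⟩
    rw [Psi_apply, dif_neg h]

lemma Phi_Psi (m n : ℕ) (g : (Fin n → {z : ZMod m // z ≠ 1}) → ℚ) :
    Phi m n (Psi m n g) = g := by
  funext y
  show Psi m n g (repF m n fun j => (y j : ZMod m)) = g y
  have hd : diffF m n (repF m n fun j => (y j : ZMod m)) = fun j => (y j : ZMod m) :=
    diffF_rep m n _
  have h1 : ∀ j, diffF m n (repF m n fun j' => (y j' : ZMod m)) j ≠ 1 := by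
    intro j; rw [congrFun hd j]; exact (y j).2
  rw [Psi_apply, dif_pos h1]
  congr 1
  funext j
  exact Subtype.ext (congrFun hd j)

lemma Psi_Phi (m n : ℕ) [NeZero m] (f : C m (n + 1)) (hS : Sl m (n + 1) f = f)
    (hN : f ∈ Nsub m (n + 1)) : Psi m n (Phi m n f) = f := by
  funext x
  rw [Psi_apply]
  by_cases h : ∀ j, diffF m n x j ≠ 1
  · rw [dif_pos h]
    show f (repF m n fun j =>
      ((⟨diffF m n x j, h j⟩ : {z : ZMod m // z ≠ 1}) : ZMod m)) = f x
    have e : (fun j => ((⟨diffF m n x j, h j⟩ : {z : ZMod m // z ≠ 1}) : ZMod m))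
        = diffF m n x := rfl
    rw [e, repF_diff]
    exact shift_inv m (n + 1) f hS x (x 0)
  · rw [dif_neg h]
    push_neg at h
    obtain ⟨j, hj⟩ := h
    refine (hN x ?_).symm
    rw [isDeg_iff]
    refine ⟨j, ?_⟩
    have h2 : x j.castSucc - x j.succ = 1 := hj
    have h3 : x j.castSucc = x j.succ + 1 := by rw [← h2]; ring
    exact h3

lemma finrank_ASpace (m n : ℕ) (hm : 2 ≤ m) :
    Module.finrank ℚ ↥(LinearMap.ker (Sl m (n + 1) - 1) ⊓ Nsub m (n + 1))
      = (m - 1) ^ n := by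
  haveI : NeZero m := ⟨by omega⟩
  set A := LinearMap.ker (Sl m (n + 1) - 1) ⊓ Nsub m (n + 1) with hA
  let e1 : ↥A →ₗ[ℚ] ((Fin n → {z : ZMod m // z ≠ 1}) → ℚ) := (Phi m n).comp A.subtype
  let e2 : ((Fin n → {z : ZMod m // z ≠ 1}) → ℚ) →ₗ[ℚ] ↥A :=
    LinearMap.codRestrict A (Psi m n) (Psi_mem m n)
  have h12 : e1.comp e2 = LinearMap.id := by
    refine LinearMap.ext fun g => ?_
    show Phi m n (Psi m n g) = g
    exact Phi_Psi m n g
  have h21 : e2.comp e1 = LinearMap.id := by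
    refine LinearMap.ext fun f => Subtype.ext ?_
    show Psi m n (Phi m n f.1) = f.1
    have hS : Sl m (n + 1) f.1 = f.1 := by
      have h : (Sl m (n + 1) - 1) f.1 = 0 := f.2.1
      rw [LinearMap.sub_apply, Module.End.one_apply, sub_eq_zero] at h
      exact h
    exact Psi_Phi m n f.1 hS f.2.2
  have heq := LinearEquiv.finrank_eq (LinearEquiv.ofLinear e1 e2 h12 h21)
  rw [heq, Module.finrank_pi, Fintype.card_fun, Fintype.card_fin]
  congr 1
  rw [Fintype.card_subtype_compl, ZMod.card, Fintype.card_subtype_eq]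

end
end YB


/-- the coboundary of the rational Yang–Baxter cochain complex of the cyclic
biquandle `C_m` maps normalized cochains to normalized cochains, and the `n`-th normalized
set-theoretic Yang–Baxter cohomology `(ker δⁿ ∩ Nⁿ) / δ^{n−1}(N^{n−1})` has `ℚ`-dimension
`(m−1)^{n−1}`. (The degree `n ≥ 1` is realized as `n+1` with `n : ℕ` arbitrary, so the
dimension reads `(m−1)^n`.) -/
theorem normalized_betti_number_cyclic_biquandle (m n : ℕ) (hm : 2 ≤ m) :
    (∀ (k : ℕ) (f : (Fin k → ZMod m) → ℚ), f ∈ Nsub m k → deltaLin m k f ∈ Nsub m (k + 1)) ∧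
    Module.finrank ℚ
      (↥(LinearMap.ker (deltaLin m (n + 1)) ⊓ Nsub m (n + 1)) ⧸
        Submodule.comap (LinearMap.ker (deltaLin m (n + 1)) ⊓ Nsub m (n + 1)).subtype
          (Submodule.map (deltaLin m n) (Nsub m n))) = (m - 1) ^ n := by
  have hm0 : m ≠ 0 := by omega
  haveI : NeZero m := ⟨hm0⟩
  have part1 : ∀ (k : ℕ) (f : (Fin k → ZMod m) → ℚ),
      f ∈ Nsub m k → deltaLin m k f ∈ Nsub m (k + 1) := by
    intro k f hf
    rw [YB.delta_eq]
    exact YB.Dl_mem m k _ (Submodule.sub_mem _ (YB.Sl_mem m k f hf) hf)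
  refine ⟨part1, ?_⟩
  set A := LinearMap.ker (YB.Sl m (n + 1) - 1) ⊓ Nsub m (n + 1) with hAdef
  set W := Submodule.map (deltaLin m n) (Nsub m n) with hWdef
  set K := LinearMap.ker (deltaLin m (n + 1)) ⊓ Nsub m (n + 1) with hKdef
  have hAK : A ≤ K := by
    intro f hf
    rw [hAdef, Submodule.mem_inf] at hf
    obtain ⟨hfS, hfN⟩ := hf
    have hS : YB.Sl m (n + 1) f = f := by
      have h : (YB.Sl m (n + 1) - 1) f = 0 := hfS
      rwa [LinearMap.sub_apply, Module.End.one_apply, sub_eq_zero] at h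
    rw [hKdef, Submodule.mem_inf]
    refine ⟨?_, hfN⟩
    show deltaLin m (n + 1) f = 0
    rw [YB.delta_eq, hS, sub_self, map_zero]
  have hAW : A ⊓ W = ⊥ := by
    rw [eq_bot_iff]
    intro f hf
    rw [Submodule.mem_inf] at hf
    obtain ⟨hfA, hfW⟩ := hf
    rw [hAdef, Submodule.mem_inf] at hfA
    obtain ⟨hfS, hfN⟩ := hfA
    rw [hWdef, Submodule.mem_map] at hfW
    obtain ⟨g, hgN, hgf⟩ := hfW
    have hS : YB.Sl m (n + 1) f = f := by
      have h : (YB.Sl m (n + 1) - 1) f = 0 := hfS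
      rwa [LinearMap.sub_apply, Module.End.one_apply, sub_eq_zero] at h
    have h1 : YB.Pop m (n + 1) f = f := YB.Pop_fixed m (n + 1) hm0 f hS
    have h2 : YB.Pop m (n + 1) f = 0 := by
      rw [← hgf, YB.delta_eq, ← YB.Dl_Pop]
      have h3 : YB.Pop m n (YB.Sl m n g - g) = 0 := by
        rw [map_sub]
        have h4 : YB.Pop m n (YB.Sl m n g) = YB.Pop m n g := by
          have h5 := congrArg (fun L : Module.End ℚ (YB.C m n) => L g)
            (YB.Pop_mul_Sl m n)
          simpa [Module.End.mul_apply] using h5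
        rw [h4, sub_self]
      rw [h3, map_zero]
    rw [Submodule.mem_bot, ← h1, h2]
  have hKsub : K ≤ A ⊔ W := by
    intro f hf
    rw [hKdef, Submodule.mem_inf] at hf
    obtain ⟨hfker, hfN⟩ := hf
    have hfker' : deltaLin m (n + 1) f = 0 := hfker
    set fA := YB.Pop m (n + 1) f with hfAdef
    set fB := f - fA with hfBdef
    have hfA_S : YB.Sl m (n + 1) fA = fA := by
      have h := congrArg (fun L : Module.End ℚ (YB.C m (n + 1)) => L f)
        (YB.Sl_mul_Pop m (n + 1))
      simpa [Module.End.mul_apply] using h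
    have hfA_N : fA ∈ Nsub m (n + 1) := YB.Pop_mem m (n + 1) f hfN
    have hfA_A : fA ∈ A := by
      rw [hAdef, Submodule.mem_inf]
      refine ⟨?_, hfA_N⟩
      show (YB.Sl m (n + 1) - 1) fA = 0
      rw [LinearMap.sub_apply, Module.End.one_apply, hfA_S, sub_self]
    have hfB_N : fB ∈ Nsub m (n + 1) := Submodule.sub_mem _ hfN hfA_N
    have hdfA : deltaLin m (n + 1) fA = 0 := by
      rw [YB.delta_eq, hfA_S, sub_self, map_zero]
    have hdfB : deltaLin m (n + 1) fB = 0 := by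
      rw [hfBdef, map_sub, hfker', hdfA, sub_zero]
    have hDfB : YB.Dl m (n + 1) fB = 0 := by
      set u := YB.Top m (n + 1) f with hu
      have hfB_eq : fB = u - YB.Sl m (n + 1) u := by
        have h := congrArg (fun L : Module.End ℚ (YB.C m (n + 1)) => L f)
          (YB.one_sub_Pop m (n + 1) hm0)
        simp only [LinearMap.sub_apply, Module.End.one_apply,
          Module.End.mul_apply] at h
        rw [hfBdef, hfAdef, hu]
        exact h
      have h1 : (YB.Sl m (n + 2) - 1) (YB.Dl m (n + 1) fB) = 0 := by
        have h2 := hdfB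
        rw [YB.delta_eq'] at h2
        rw [LinearMap.sub_apply, Module.End.one_apply]
        exact h2
      have h2 : YB.Dl m (n + 1) fB
          = -((YB.Sl m (n + 2) - 1) (YB.Dl m (n + 1) u)) := by
        rw [hfB_eq, map_sub, YB.Dl_Sl, LinearMap.sub_apply, Module.End.one_apply,
          neg_sub]
      have h3 : (YB.Sl m (n + 2) - 1)
          ((YB.Sl m (n + 2) - 1) (YB.Dl m (n + 1) u)) = 0 := by
        have h4 := h1
        rw [h2, map_neg, neg_eq_zero] at h4
        exact h4
      rw [h2, YB.ker_sq m (n + 2) hm0 _ h3, neg_zero]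
    have hhom : ∀ x, YB.Dl m n (YB.Hmap m n fB) x = fB (fun j => x j + 1) := by
      intro x
      have h := YB.homotopy m n fB x
      rw [hDfB, map_zero] at h
      simpa using h
    have hfB_Dl : fB = YB.Dl m n (YB.Sl m n (YB.Hmap m n fB)) := by
      funext x
      rw [YB.Dl_Sl, YB.Sl_apply, hhom]
      congr 1
      funext j
      ring
    set g0 := YB.Sl m n (YB.Hmap m n fB) with hg0
    have hg0N : g0 ∈ Nsub m n := YB.Sl_mem m n _ (YB.Hmap_mem m n fB hfB_N)
    have hPfB : YB.Pop m (n + 1) fB = 0 := by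
      rw [hfBdef, map_sub, hfAdef]
      have h := congrArg (fun L : Module.End ℚ (YB.C m (n + 1)) => L f)
        (YB.Pop_mul_Pop m (n + 1) hm0)
      simp only [Module.End.mul_apply] at h
      rw [h, sub_self]
    have hfB_W : fB ∈ W := by
      rw [hWdef, Submodule.mem_map]
      set u0 := YB.Top m n g0 with hu0
      refine ⟨-u0, Submodule.neg_mem _ (YB.Top_mem m n g0 hg0N), ?_⟩
      rw [YB.delta_eq]
      have he : YB.Sl m n (-u0) - (-u0) = u0 - YB.Sl m n u0 := by
        rw [map_neg]
        abel
      rw [he, map_sub, YB.Dl_Sl]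
      have hTop : YB.Dl m n u0 = YB.Top m (n + 1) fB := by
        rw [hu0, YB.Dl_Top, ← hfB_Dl]
      rw [hTop]
      have h := congrArg (fun L : Module.End ℚ (YB.C m (n + 1)) => L fB)
        (YB.one_sub_Pop m (n + 1) hm0)
      simp only [LinearMap.sub_apply, Module.End.one_apply,
        Module.End.mul_apply] at h
      rw [hPfB, sub_zero] at h
      exact h.symm
    have hsum : f = fA + fB := by rw [hfBdef]; abel
    rw [hsum]
    exact Submodule.add_mem _ (Submodule.mem_sup_left hfA_A)
      (Submodule.mem_sup_right hfB_W)
  have hWK : K = A ⊔ (W ⊓ K) := by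
    have h1 : (A ⊔ W) ⊓ K = A ⊔ (W ⊓ K) := sup_inf_assoc_of_le W hAK
    have h2 : (A ⊔ W) ⊓ K = K := inf_eq_right.mpr hKsub
    rw [← h1, h2]
  have hdisj : A ⊓ (W ⊓ K) = ⊥ := by
    rw [eq_bot_iff, ← hAW]
    exact inf_le_inf_left A inf_le_left
  have hA := YB.finrank_ASpace m n hm
  rw [← hAdef] at hA
  have hrank1 : Module.finrank ℚ ↥K
      = (m - 1) ^ n + Module.finrank ℚ ↥(W ⊓ K) := by
    conv_lhs => rw [hWK]
    rw [← hA]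
    have h := Submodule.finrank_sup_add_finrank_inf_eq A (W ⊓ K)
    rw [hdisj, finrank_bot, Nat.add_zero] at h
    exact h
  have e2 : Module.finrank ℚ ↥(Submodule.comap K.subtype W)
      = Module.finrank ℚ ↥(W ⊓ K) := by
    conv_rhs => rw [inf_comm W K, ← Submodule.map_comap_subtype K W]
    exact (Submodule.finrank_map_subtype_eq K _).symm
  have e3 : Module.finrank ℚ (↥K ⧸ Submodule.comap K.subtype W)
      + Module.finrank ℚ ↥(Submodule.comap K.subtype W) = Module.finrank ℚ ↥K :=
    Submodule.finrank_quotient_add_finrank (Submodule.comap K.subtype W)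
  omega
end

section
/- Let n ≥ 2, let f : (ℤ/mℤ)^n → ℤ be an n-cocycle of the integral Yang–Baxter cochain complex of the cyclic biquandle C_m (δ^n f = 0), and fix y ∈ ℤ/mℤ. Define the (n−1)-cochain f_y by f_y(x_1,…,x_{n−1}) = f(x_1,…,x_{n−1},y) and the n-cochain Δ_y f by (Δ_y f)(x_1,…,x_n) = Σ_{i=1}^{n} (−1)^i [ f(x_1,…,x_{i−1}, x_{i+1}+1,…,x_n+1, y) − f(x_1,…,x_{i−1}, x_{i+1}+1,…,x_n+1, y+1) ]. Then δ^{n−1}(f_y) = Δ_y f − (−1)^n (Sf − f), where (Sf)(x_1,…,x_n) = f(x_1−1,…,x_n−1); in particular Sf − f is cohomologous to (−1)^n Δ_y f. -/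
lemma dl_snoc (m n : ℕ) (i : Fin (n+2)) (x : Fin (n+2) → ZMod m) (y : ZMod m) :
    dl m (n+2) i.castSucc (Fin.snoc x y) = Fin.snoc (dl m (n+1) i x) y := by
  funext j
  refine Fin.lastCases ?_ (fun j => ?_) j
  · simp only [dl, Fin.snoc_last, Fin.coe_castSucc, Fin.val_last, Fin.succ_last,
      Fin.snoc_castSucc]
    have := i.isLt
    rw [if_neg (by omega)]
  · simp only [dl, Fin.coe_castSucc, Fin.snoc_castSucc, Fin.succ_castSucc]

lemma dr_snoc (m n : ℕ) (i : Fin (n+2)) (x : Fin (n+2) → ZMod m) (y : ZMod m) :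
    dr m (n+2) i.castSucc (Fin.snoc x y) = Fin.snoc (dr m (n+1) i x) (y+1) := by
  funext j
  refine Fin.lastCases ?_ (fun j => ?_) j
  · simp only [dr, Fin.snoc_last, Fin.coe_castSucc, Fin.val_last, Fin.succ_last,
      Fin.snoc_castSucc]
    have := i.isLt
    rw [if_neg (by omega)]
  · simp only [dr, Fin.coe_castSucc, Fin.snoc_castSucc, Fin.succ_castSucc]

lemma dl_last (m n : ℕ) (x : Fin (n+2) → ZMod m) (y : ZMod m) :
    dl m (n+2) (Fin.last (n+2)) (Fin.snoc x y) = fun j => x j - 1 := by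
  funext j
  have : (j : ℕ) < (Fin.last (n+2) : ℕ) := j.isLt
  simp [dl, this]

lemma dr_last (m n : ℕ) (x : Fin (n+2) → ZMod m) (y : ZMod m) :
    dr m (n+2) (Fin.last (n+2)) (Fin.snoc x y) = x := by
  funext j
  have : (j : ℕ) < (Fin.last (n+2) : ℕ) := j.isLt
  simp [dr, this]

/-- let `f` be an integral `n`-cocycle (`n ≥ 2`) of the Yang–Baxter cochain
complex of the cyclic biquandle `C_m` and `y ∈ ℤ/m`. With `f_y(x₁,…,x_{n−1}) = f(x₁,…,x_{n−1},y)`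
and `(Δ_y f)(x) = Σ_{i=1}^{n} (−1)^i [f(d^r_i x, y) − f(d^r_i x, y+1)]`, one has
`δ(f_y) = Δ_y f − (−1)^n (Sf − f)`. (The degree `n ≥ 2` is realized as `n+2` with `n : ℕ`
arbitrary.) -/
theorem delta_of_last_variable_fixed (m n : ℕ) (hm : 1 ≤ m)
    (f : (Fin (n + 2) → ZMod m) → ℤ) (hf : delta m (n + 2) f = 0) (y : ZMod m) :
    delta m (n + 1) (fun x => f (Fin.snoc x y)) = fun x =>
      (∑ i : Fin (n + 2), (-1 : ℤ) ^ ((i : ℕ) + 1) *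
        (f (Fin.snoc (dr m (n + 1) i x) y) - f (Fin.snoc (dr m (n + 1) i x) (y + 1))))
      - (-1 : ℤ) ^ (n + 2) * (shiftC m (n + 2) f x - f x) := by
  funext x
  have H := congrFun hf (Fin.snoc x y)
  simp only [delta, Pi.zero_apply, smul_eq_mul] at H ⊢
  rw [Fin.sum_univ_castSucc] at H
  simp only [Fin.coe_castSucc, Fin.val_last, dl_snoc, dr_snoc, dl_last, dr_last] at H
  have hsum : (∑ i : Fin (n+2), (-1:ℤ)^(i:ℕ) *
        (f (Fin.snoc (dl m (n+1) i x) y) - f (Fin.snoc (dr m (n+1) i x) y)))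
      + (∑ i : Fin (n+2), (-1:ℤ)^(i:ℕ) *
        (f (Fin.snoc (dr m (n+1) i x) y) - f (Fin.snoc (dr m (n+1) i x) (y+1))))
      = ∑ i : Fin (n+2), (-1:ℤ)^(i:ℕ) *
        (f (Fin.snoc (dl m (n+1) i x) y) - f (Fin.snoc (dr m (n+1) i x) (y+1))) := by
    rw [← Finset.sum_add_distrib]
    exact Finset.sum_congr rfl fun i _ => by ring
  have hQ : (∑ i : Fin (n+2), (-1:ℤ)^((i:ℕ)+1) *
        (f (Fin.snoc (dr m (n+1) i x) y) - f (Fin.snoc (dr m (n+1) i x) (y+1))))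
      = - ∑ i : Fin (n+2), (-1:ℤ)^(i:ℕ) *
        (f (Fin.snoc (dr m (n+1) i x) y) - f (Fin.snoc (dr m (n+1) i x) (y+1))) := by
    rw [← Finset.sum_neg_distrib]
    exact Finset.sum_congr rfl fun i _ => by ring
  have hS : f (fun j => x j - 1) = shiftC m (n+2) f x := rfl
  rw [hS] at H
  linear_combination hsum + H - hQ
end

section
/- Let T ⊆ (ℤ/mℤ)^n be a transversal of the diagonal-shift orbits, let k : T → ℤ, and suppose some positive integer multiple of the cochain Σ_{x∈T} k(x)·F_x is a coboundary in the integral Yang–Baxter cochain complex of the cyclic biquandle C_m, i.e. there exist p ≥ 1 and g : (ℤ/mℤ)^{n−1} → ℤ with δ^{n−1} g = p·Σ_{x∈T} k(x)·F_x. Then k(x) = 0 for all x ∈ T. (In particular the cohomology classes of the orbit indicator cocycles F_x, x ∈ T, are linearly independent and span a subgroup of the free part of H^n_{YB}(C_m;ℤ).) -/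
/-- `y` is in the diagonal-shift orbit of `x`: `y = (x₁−c,…,x_k−c)` for some `c ∈ ℤ/m`. -/
def inOrbit (m k : ℕ) (x y : Fin k → ZMod m) : Prop :=
  ∃ c : ZMod m, ∀ j, y j = x j - c

/-- The orbit indicator cochain `F_x`: value `1` on the diagonal-shift orbit of `x`, `0`
elsewhere (an integral Yang–Baxter cocycle). -/
noncomputable def Fx (m k : ℕ) (x : Fin k → ZMod m) : (Fin k → ZMod m) → ℤ :=
  Set.indicator {y | inOrbit m k x y} fun _ => 1

/-- if `T` is a transversal of the diagonal-shift orbits of `(ℤ/m)^n`,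
`k : T → ℤ`, and some positive multiple `p·Σ_{x∈T} k(x)·F_x` is an integral Yang–Baxter
coboundary of the cyclic biquandle `C_m`, then all `k(x)` vanish. (The degree `n ≥ 1` is
realized as `n+1` with `n : ℕ` arbitrary.) -/
theorem orbit_indicator_classes_independent (m n : ℕ) (hm : 1 ≤ m)
    (T : Finset (Fin (n + 1) → ZMod m))
    (hT : ∀ y : Fin (n + 1) → ZMod m, ∃! x, x ∈ T ∧ inOrbit m (n + 1) x y)
    (k : (Fin (n + 1) → ZMod m) → ℤ) (p : ℕ) (hp : 1 ≤ p)
    (g : (Fin n → ZMod m) → ℤ)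
    (hg : delta m n g = fun y => (p : ℤ) * ∑ x ∈ T, k x * Fx m (n + 1) x y) :
    ∀ x ∈ T, k x = 0 := by
  intro x hx
  haveI : NeZero m := ⟨by omega⟩
  -- The sum of the coboundary over the diagonal-shift orbit of `x` vanishes.
  have key : ∑ c : ZMod m, delta m n g (fun j => x j - c) = 0 := by
    have hdl : ∀ (i : Fin (n + 1)) (c : ZMod m),
        dl m n i (fun j => x j - c) = fun j => dl m n i x j - c := by
      intro i c; funext j; simp only [dl]; split_ifs <;> ring
    have hdr : ∀ (i : Fin (n + 1)) (c : ZMod m),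
        dr m n i (fun j => x j - c) = fun j => dl m n i x j + 1 - c := by
      intro i c; funext j; simp only [dr, dl]; split_ifs <;> ring
    have hsum : ∀ u : Fin n → ZMod m,
        ∑ c : ZMod m, g (fun j => u j + 1 - c) = ∑ c : ZMod m, g (fun j => u j - c) := by
      intro u
      refine (Fintype.sum_equiv (Equiv.addRight (1 : ZMod m))
        (fun c => g (fun j => u j - c)) (fun c => g (fun j => u j + 1 - c)) ?_).symm
      intro c
      simp only [Equiv.coe_addRight]
      congr 1; funext j; ring
    simp only [delta, hdl, hdr]
    rw [Finset.sum_comm]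
    refine Finset.sum_eq_zero fun i _ => ?_
    rw [← Finset.smul_sum, Finset.sum_sub_distrib, hsum, sub_self, smul_zero]
  -- Evaluate the same orbit sum using `hg`.
  have heval : ∀ c : ZMod m,
      (∑ x' ∈ T, k x' * Fx m (n + 1) x' (fun j => x j - c)) = k x := by
    intro c
    rw [Finset.sum_eq_single x]
    · have h1 : Fx m (n + 1) x (fun j => x j - c) = 1 := by
        rw [Fx, Set.indicator_of_mem]
        exact ⟨c, fun j => rfl⟩
      rw [h1, mul_one]
    · intro x' hx' hne
      have h0 : Fx m (n + 1) x' (fun j => x j - c) = 0 := by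
        rw [Fx, Set.indicator_of_notMem]
        intro horb
        obtain ⟨z, hz1, hz2⟩ := hT (fun j => x j - c)
        exact hne ((hz2 x' ⟨hx', horb⟩).trans (hz2 x ⟨hx, c, fun j => rfl⟩).symm)
      rw [h0, mul_zero]
    · intro h; exact absurd hx h
  have hfin : (m : ℤ) * ((p : ℤ) * k x) = 0 := by
    calc (m : ℤ) * ((p : ℤ) * k x)
        = ∑ _c : ZMod m, (p : ℤ) * k x := by
          rw [Finset.sum_const, Finset.card_univ, ZMod.card, nsmul_eq_mul]
      _ = ∑ c : ZMod m, delta m n g (fun j => x j - c) := by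
          simp only [hg]
          exact Finset.sum_congr rfl fun c _ => by rw [heval c]
      _ = 0 := key
  have hm' : (m : ℤ) ≠ 0 := by exact_mod_cast Nat.one_le_iff_ne_zero.mp hm
  have hp' : (p : ℤ) ≠ 0 := by exact_mod_cast Nat.one_le_iff_ne_zero.mp hp
  rcases mul_eq_zero.mp hfin with h | h
  · exact absurd h hm'
  · rcases mul_eq_zero.mp h with h | h
    · exact absurd h hp'
    · exact h
end

section
/- Let T ⊆ (ℤ/mℤ)^n be a transversal of the diagonal-shift orbits. Then the rational cohomology classes of the orbit indicator cocycles F_x, x ∈ T, span H^n_{YB}(C_m;ℚ): for every n-cocycle f : (ℤ/mℤ)^n → ℚ of the rational Yang–Baxter cochain complex of the cyclic biquandle C_m there exist coefficients α : T → ℚ and an (n−1)-cochain g with δ^{n−1} g = f − Σ_{x∈T} α(x)·F_x. -/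
/-- The rational orbit indicator cochain `F_x`: value `1` on the diagonal-shift orbit of
`x`, `0` elsewhere. -/
noncomputable def FxQ (m k : ℕ) (x : Fin k → ZMod m) : (Fin k → ZMod m) → ℚ :=
  Set.indicator {y | inOrbit m k x y} fun _ => 1

namespace YBaux

/-- The simplicial coboundary built from the right face maps. -/
def Dop (m k : ℕ) (g : (Fin k → ZMod m) → ℚ) : (Fin (k + 1) → ZMod m) → ℚ :=
  fun x => ∑ i : Fin (k + 1), (-1 : ℤ) ^ (i : ℕ) • g (dr m k i x)

/-- Contracting homotopy for `Dop`. -/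
def Hop (m k : ℕ) (G : (Fin (k + 1) → ZMod m) → ℚ) : (Fin k → ZMod m) → ℚ :=
  fun x => G (Fin.cons 0 (fun j => x j - 1))

/-- Averaging projection onto shift-invariant cochains. -/
def Pop (m k : ℕ) [NeZero m] (f : (Fin k → ZMod m) → ℚ) : (Fin k → ZMod m) → ℚ :=
  fun x => (m : ℚ)⁻¹ * ∑ c : ZMod m, f (fun j => x j - c)

/-- The operator `(1/m) Σ_{c<m} Σ_{t<c} Sᵗ`. -/
def Qop (m k : ℕ) [NeZero m] (f : (Fin k → ZMod m) → ℚ) : (Fin k → ZMod m) → ℚ :=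
  fun x => (m : ℚ)⁻¹ * ∑ c ∈ Finset.range m, ∑ t ∈ Finset.range c,
    f (fun j => x j - (t : ZMod m))

lemma dr_shift (m k : ℕ) (i : Fin (k + 1)) (x : Fin (k + 1) → ZMod m) (c : ZMod m) :
    dr m k i (fun j => x j - c) = fun j => dr m k i x j - c := by
  funext j
  simp only [dr]
  split <;> ring

lemma dl_eq (m k : ℕ) (i : Fin (k + 1)) (x : Fin (k + 1) → ZMod m) :
    dl m k i x = fun j => dr m k i x j - 1 := by
  funext j
  simp only [dl, dr]
  split <;> ring

lemma delta_eq (m k : ℕ) (g : (Fin k → ZMod m) → ℚ) :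
    delta m k g = Dop m k (fun y => g (fun j => y j - 1) - g y) := by
  funext x
  refine Finset.sum_congr rfl fun i _ => ?_
  rw [dl_eq]

lemma dr_zero_cons (m k : ℕ) (x : Fin (k + 1) → ZMod m) :
    dr m (k + 1) 0 (Fin.cons 0 (fun j => x j - 1)) = x := by
  funext j
  simp [dr, sub_add_cancel]

lemma dr_succ_cons (m k : ℕ) (t : Fin (k + 1)) (x : Fin (k + 1) → ZMod m) :
    dr m (k + 1) t.succ (Fin.cons 0 (fun j => x j - 1))
      = Fin.cons 0 (fun j => dr m k t x j - 1) := by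
  funext j
  induction j using Fin.cases with
  | zero => simp [dr]
  | succ s =>
      simp only [dr, Fin.cons_succ, Fin.val_succ]
      by_cases h : (s : ℕ) < (t : ℕ)
      · rw [if_pos (by omega), if_pos h, ← Fin.succ_castSucc, Fin.cons_succ]
      · rw [if_neg (by omega), if_neg h]
        ring

lemma homotopy (m k : ℕ) (G : (Fin (k + 1) → ZMod m) → ℚ) (x : Fin (k + 1) → ZMod m) :
    Dop m k (Hop m k G) x + Hop m (k + 1) (Dop m (k + 1) G) x = G x := by
  have h2 : Hop m (k + 1) (Dop m (k + 1) G) x = G x - Dop m k (Hop m k G) x := by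
    show Dop m (k + 1) G (Fin.cons 0 (fun j => x j - 1)) = _
    rw [Dop, Fin.sum_univ_succ]
    simp only [Fin.val_zero, pow_zero, one_smul, Fin.val_succ, dr_zero_cons, dr_succ_cons,
      pow_succ, mul_comm, mul_smul, neg_smul, one_smul, Finset.sum_neg_distrib]
    rw [Dop]
    simp only [Hop, sub_eq_add_neg]
  rw [h2]; ring

lemma sum_range_zmod (m : ℕ) [NeZero m] (G : ZMod m → ℚ) :
    ∑ c ∈ Finset.range m, G (c : ZMod m) = ∑ c : ZMod m, G c := by
  refine Finset.sum_bij' (fun c _ => (c : ZMod m)) (fun c _ => c.val) ?_ ?_ ?_ ?_ ?_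
  · intros; exact Finset.mem_univ _
  · intro a _; exact Finset.mem_range.mpr (ZMod.val_lt a)
  · intro a ha; exact ZMod.val_cast_of_lt (Finset.mem_range.mp ha)
  · intro a _; exact ZMod.natCast_zmod_val a
  · intros; rfl

lemma Pop_shift (m k : ℕ) [NeZero m] (f : (Fin k → ZMod m) → ℚ) (y : Fin k → ZMod m) (d : ZMod m) :
    Pop m k f (fun j => y j - d) = Pop m k f y := by
  simp only [Pop]
  congr 1
  refine Fintype.sum_equiv (Equiv.addLeft d) _ _ fun c => ?_
  congr 1
  funext j
  show y j - d - c = y j - (d + c)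
  ring

lemma Qop_sub (m k : ℕ) [NeZero m] (a b : (Fin k → ZMod m) → ℚ) (x : Fin k → ZMod m) :
    Qop m k (fun y => a y - b y) x = Qop m k a x - Qop m k b x := by
  simp only [Qop, Finset.sum_sub_distrib, mul_sub]

lemma Qop_telescope (m k : ℕ) [NeZero m] (f : (Fin k → ZMod m) → ℚ) (x : Fin k → ZMod m) :
    Qop m k f x - Qop m k (fun y => f (fun j => y j - 1)) x = f x - Pop m k f x := by
  simp only [Qop, Pop, ← mul_sub, ← Finset.sum_sub_distrib]
  have hin : ∀ c ∈ Finset.range m,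
      (∑ t ∈ Finset.range c, (f (fun j => x j - (t : ZMod m))
        - f (fun j => (fun j' => x j' - (t : ZMod m)) j - 1)))
      = f x - f (fun j => x j - (c : ZMod m)) := by
    intro c _
    have : ∀ t : ℕ, f (fun j => (fun j' => x j' - (t : ZMod m)) j - 1)
        = f (fun j => x j - ((t + 1 : ℕ) : ZMod m)) := by
      intro t
      congr 1
      funext j
      push_cast
      ring
    simp only [this]
    rw [Finset.sum_range_sub' (f := fun t => f (fun j => x j - (t : ZMod m)))]
    congr 2
    funext j
    simp
  rw [Finset.sum_congr rfl hin, Finset.sum_sub_distrib, Finset.sum_const, Finset.card_range,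
    sum_range_zmod m (fun c => f (fun j => x j - c)), nsmul_eq_mul, mul_sub, ← mul_assoc,
    inv_mul_cancel₀ (by exact_mod_cast (NeZero.ne m) : (m : ℚ) ≠ 0), one_mul]

lemma Qop_shift (m k : ℕ) [NeZero m] (h : (Fin k → ZMod m) → ℚ) (x : Fin k → ZMod m) :
    Qop m k (fun y => h (fun j => y j - 1)) x = Qop m k h (fun j => x j - 1) := by
  simp only [Qop]
  congr 1
  refine Finset.sum_congr rfl fun c _ => Finset.sum_congr rfl fun t _ => ?_
  congr 1
  funext j
  ring

lemma Dop_shiftc (m k : ℕ) (g : (Fin k → ZMod m) → ℚ) (x : Fin (k + 1) → ZMod m) (c : ZMod m) :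
    Dop m k g (fun j => x j - c) = Dop m k (fun y => g (fun j => y j - c)) x := by
  refine Finset.sum_congr rfl fun i _ => ?_
  rw [dr_shift]

lemma Dop_sum {ι : Type*} (m k : ℕ) (s : Finset ι) (F : ι → (Fin k → ZMod m) → ℚ)
    (x : Fin (k + 1) → ZMod m) :
    Dop m k (fun y => ∑ a ∈ s, F a y) x = ∑ a ∈ s, Dop m k (F a) x := by
  simp only [Dop, Finset.smul_sum]
  exact Finset.sum_comm

lemma Dop_const_mul (m k : ℕ) (a : ℚ) (g : (Fin k → ZMod m) → ℚ) (x : Fin (k + 1) → ZMod m) :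
    Dop m k (fun y => a * g y) x = a * Dop m k g x := by
  simp only [Dop, Finset.mul_sum]
  refine Finset.sum_congr rfl fun i _ => ?_
  rw [zsmul_eq_mul, zsmul_eq_mul]
  ring

lemma Dop_Qop (m k : ℕ) [NeZero m] (g : (Fin k → ZMod m) → ℚ) :
    Dop m k (Qop m k g) = fun x => Qop m (k + 1) (Dop m k g) x := by
  funext x
  show Dop m k (fun y => (m : ℚ)⁻¹ * ∑ c ∈ Finset.range m, ∑ t ∈ Finset.range c,
      g (fun j => y j - (t : ZMod m))) x = _
  rw [Dop_const_mul]
  rw [Dop_sum m k (Finset.range m)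
    (fun c => fun y => ∑ t ∈ Finset.range c, g (fun j => y j - (t : ZMod m)))]
  simp only [Qop]
  congr 1
  refine Finset.sum_congr rfl fun c _ => ?_
  rw [Dop_sum m k (Finset.range c) (fun t => fun y => g (fun j => y j - (t : ZMod m)))]
  refine Finset.sum_congr rfl fun t _ => ?_
  rw [← Dop_shiftc]

lemma Dop_Pop (m k : ℕ) [NeZero m] (g : (Fin k → ZMod m) → ℚ) :
    Dop m k (Pop m k g) = fun x => Pop m (k + 1) (Dop m k g) x := by
  funext x
  show Dop m k (fun y => (m : ℚ)⁻¹ * ∑ c : ZMod m, g (fun j => y j - c)) x = _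
  rw [Dop_const_mul]
  rw [Dop_sum m k Finset.univ (fun c => fun y => g (fun j => y j - c))]
  simp only [Pop]
  congr 1
  refine Finset.sum_congr rfl fun c _ => ?_
  rw [← Dop_shiftc]

lemma Pop_sub (m k : ℕ) [NeZero m] (a b : (Fin k → ZMod m) → ℚ) (x : Fin k → ZMod m) :
    Pop m k (fun y => a y - b y) x = Pop m k a x - Pop m k b x := by
  simp only [Pop, Finset.sum_sub_distrib, mul_sub]

lemma Pop_idem (m : ℕ) [NeZero m] (k : ℕ) (f : (Fin k → ZMod m) → ℚ) (x : Fin k → ZMod m) :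
    Pop m k (Pop m k f) x = Pop m k f x := by
  have : ∀ c : ZMod m, Pop m k f (fun j => x j - c) = Pop m k f x :=
    fun c => Pop_shift m k f x c
  simp only [Pop] at this ⊢
  rw [Finset.sum_congr rfl fun c _ => this c, Finset.sum_const, Finset.card_univ, ZMod.card,
    nsmul_eq_mul, ← mul_assoc,
    inv_mul_cancel₀ (by exact_mod_cast (NeZero.ne m) : (m : ℚ) ≠ 0), one_mul]

end YBaux

namespace YBaux

lemma Dop_sub (m k : ℕ) (a b : (Fin k → ZMod m) → ℚ) (x : Fin (k + 1) → ZMod m) :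
    Dop m k (fun y => a y - b y) x = Dop m k a x - Dop m k b x := by
  simp only [Dop, smul_sub, Finset.sum_sub_distrib]

lemma Qop_neg (m k : ℕ) [NeZero m] (a : (Fin k → ZMod m) → ℚ) (x : Fin k → ZMod m) :
    Qop m k (fun y => -a y) x = -Qop m k a x := by
  simp only [Qop, Finset.sum_neg_distrib, mul_neg]

end YBaux


/-- STATEMENT 13: if `T` is a transversal of the diagonal-shift orbits of `(ℤ/m)^n`, the
rational cohomology classes of the orbit indicators `F_x`, `x ∈ T`, span `H^n_{YB}(C_m;ℚ)`:
every rational `n`-cocycle `f` differs from a linear combination `Σ_{x∈T} α(x)·F_x` by a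
coboundary. (The degree `n ≥ 1` is realized as `n+1` with `n : ℕ` arbitrary.) -/
theorem orbit_indicator_classes_span_rational_cohomology (m n : ℕ) (hm : 1 ≤ m)
    (T : Finset (Fin (n + 1) → ZMod m))
    (hT : ∀ y : Fin (n + 1) → ZMod m, ∃! x, x ∈ T ∧ inOrbit m (n + 1) x y)
    (f : (Fin (n + 1) → ZMod m) → ℚ) (hf : delta m (n + 1) f = 0) :
    ∃ α : (Fin (n + 1) → ZMod m) → ℚ, ∃ g : (Fin n → ZMod m) → ℚ,
      delta m n g = fun y => f y - ∑ x ∈ T, α x * FxQ m (n + 1) x y := by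
  haveI : NeZero m := ⟨by omega⟩
  -- `F1 = Sf - f`, a `Dop`-cocycle
  have hDF1 : YBaux.Dop m (n + 1) (fun y => f (fun j => y j - 1) - f y) = 0 := by
    rw [← YBaux.delta_eq]; exact hf
  -- contracting homotopy: `g0 := Hop F1` satisfies `Dop g0 = F1`
  have hg0 : ∀ x, YBaux.Dop m n (YBaux.Hop m n (fun y => f (fun j => y j - 1) - f y)) x
      = f (fun j => x j - 1) - f x := by
    intro x
    have h := YBaux.homotopy m n (fun y => f (fun j => y j - 1) - f y) x
    rw [hDF1] at h
    simpa [YBaux.Hop] using h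
  set g0 := YBaux.Hop m n (fun y => f (fun j => y j - 1) - f y) with hg0def
  -- `w := Q g0` satisfies `Dop w = Pf - f`
  have hQF1 : ∀ y, YBaux.Qop m (n + 1) (fun y => f (fun j => y j - 1) - f y) y
      = YBaux.Pop m (n + 1) f y - f y := by
    intro y
    have h1 := YBaux.Qop_sub m (n + 1) (fun z => f (fun j => z j - 1)) f y
    have h2 := YBaux.Qop_telescope m (n + 1) f y
    rw [h1]
    linarith
  have hDw : ∀ y, YBaux.Dop m n (YBaux.Qop m n g0) y
      = YBaux.Pop m (n + 1) f y - f y := by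
    intro y
    rw [YBaux.Dop_Qop]
    have h3 : YBaux.Dop m n g0 = fun x => f (fun j => x j - 1) - f x := funext hg0
    rw [h3]
    exact hQF1 y
  set w := YBaux.Qop m n g0 with hwdef
  -- `Dop (Sw - w) = -F1`
  have hV : ∀ y', YBaux.Dop m n (fun u => w (fun j => u j - 1) - w u) y'
      = -(f (fun j => y' j - 1) - f y') := by
    intro y'
    rw [YBaux.Dop_sub]
    have h1 : YBaux.Dop m n (fun u => w (fun j => u j - 1)) y'
        = YBaux.Dop m n w (fun j => y' j - 1) := (YBaux.Dop_shiftc m n w y' 1).symm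
    rw [h1, hDw, hDw, YBaux.Pop_shift]
    ring
  -- the coboundary computation: `δ (Q w) = f - P f`
  have hmain : ∀ y, delta m n (YBaux.Qop m n w) y
      = f y - YBaux.Pop m (n + 1) f y := by
    intro y
    rw [YBaux.delta_eq]
    have hshift : (fun z => YBaux.Qop m n w (fun j => z j - 1) - YBaux.Qop m n w z)
        = fun z => YBaux.Qop m n (fun u => w (fun j => u j - 1)) z - YBaux.Qop m n w z := by
      funext z
      rw [YBaux.Qop_shift]
    rw [hshift]
    have hsub : (fun z => YBaux.Qop m n (fun u => w (fun j => u j - 1)) z - YBaux.Qop m n w z)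
        = YBaux.Qop m n (fun u => w (fun j => u j - 1) - w u) := by
      funext z
      rw [YBaux.Qop_sub]
    rw [hsub, YBaux.Dop_Qop]
    have hVfun : YBaux.Dop m n (fun u => w (fun j => u j - 1) - w u)
        = fun y' => -(f (fun j => y' j - 1) - f y') := funext hV
    show YBaux.Qop m (n + 1) (YBaux.Dop m n fun u => w (fun j => u j - 1) - w u) y = _
    rw [hVfun]
    have hneg := YBaux.Qop_neg m (n + 1) (fun y' => f (fun j => y' j - 1) - f y') y
    rw [hneg, hQF1]
    ring
  -- the invariant part is the span of the orbit indicators over `T`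
  have horb : ∀ y, (∑ x ∈ T, YBaux.Pop m (n + 1) f x * FxQ m (n + 1) x y)
      = YBaux.Pop m (n + 1) f y := by
    intro y
    obtain ⟨x₀, ⟨hx₀T, hx₀o⟩, huniq⟩ := hT y
    rw [Finset.sum_eq_single_of_mem x₀ hx₀T]
    · have h1 : FxQ m (n + 1) x₀ y = 1 := by
        have hmem : y ∈ {z | inOrbit m (n + 1) x₀ z} := hx₀o
        simp only [FxQ]
        exact Set.indicator_of_mem hmem (fun _ => (1:ℚ))
      rw [h1, mul_one]
      obtain ⟨c, hc⟩ := hx₀o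
      have hy : y = fun j => x₀ j - c := funext hc
      rw [hy, YBaux.Pop_shift]
    · intro b hbT hbne
      have hno : ¬ inOrbit m (n + 1) b y := fun ho => hbne (huniq b ⟨hbT, ho⟩)
      have h0 : FxQ m (n + 1) b y = 0 := by
        have hmem : y ∉ {z | inOrbit m (n + 1) b z} := hno
        simp only [FxQ]
        exact Set.indicator_of_notMem hmem (fun _ => (1:ℚ))
      rw [h0, mul_zero]
  refine ⟨YBaux.Pop m (n + 1) f, YBaux.Qop m n w, ?_⟩
  funext y
  rw [horb y, hmain y]
end

section
/- Let m be even. Then the torsion subgroup of the n-th integral set-theoretic Yang–Baxter cohomology group of the cyclic biquandle C_m is annihilated by 2m: for every n-cocycle f : (ℤ/mℤ)^n → ℤ (δ^n f = 0) such that some positive multiple of f is a coboundary (there exist k ≥ 1 and g with δ^{n−1} g = k·f), the multiple 2m·f is itself a coboundary, i.e. there exists h : (ℤ/mℤ)^{n−1} → ℤ with δ^{n−1} h = 2m·f. -/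
def Dop (m k : ℕ) (f : (Fin k → ZMod m) → ℤ) : (Fin (k+1) → ZMod m) → ℤ :=
  fun x => ∑ i : Fin (k+1), (-1:ℤ)^(i:ℕ) * f (dr m k i x)

lemma dl_eq_dr (m k : ℕ) (i : Fin (k+1)) (x : Fin (k+1) → ZMod m) :
    dl m k i x = dr m k i (fun j => x j - 1) := by
  funext j; simp only [dl, dr]; split <;> ring

lemma dr_shift (m k : ℕ) (i : Fin (k+1)) (x : Fin (k+1) → ZMod m) (v : ZMod m) :
    dr m k i (fun j => x j - v) = fun j => dr m k i x j - v := by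
  funext j; simp only [dr]; split <;> ring

lemma E1 (m k : ℕ) (w : (Fin k → ZMod m) → ℤ) (x : Fin (k+1) → ZMod m) :
    delta m k w x = Dop m k w (fun j => x j - 1) - Dop m k w x := by
  unfold delta Dop
  rw [← Finset.sum_sub_distrib]
  refine Finset.sum_congr rfl fun i _ => ?_
  rw [dl_eq_dr, smul_eq_mul]
  ring

def prep (m : ℕ) {k : ℕ} (a : ZMod m) (x : Fin k → ZMod m) : Fin (k+1) → ZMod m :=
  Fin.cons a (fun j => x j - 1)

lemma dr_zero_prep (m k : ℕ) (a : ZMod m) (x : Fin k → ZMod m) :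
    dr m k 0 (prep m a x) = x := by
  funext j
  simp [dr, prep]

lemma dr_succ_prep (m k : ℕ) (i : Fin (k+1)) (a : ZMod m) (x : Fin (k+1) → ZMod m) :
    dr m (k+1) i.succ (prep m a x) = prep m a (dr m k i x) := by
  funext j
  refine Fin.cases ?_ (fun j' => ?_) j
  · simp [dr, prep]
  · by_cases h : (j' : ℕ) < (i : ℕ)
    · have h1 : ((j'.succ : Fin (k+1)) : ℕ) < ((i.succ) : ℕ) := by
        simpa using Nat.succ_lt_succ h
      simp only [dr, prep, if_pos h1, if_pos h, ← Fin.succ_castSucc, Fin.cons_succ]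
    · have h1 : ¬ ((j'.succ : Fin (k+1)) : ℕ) < ((i.succ) : ℕ) := by
        simpa using h
      simp only [dr, prep, if_neg h1, if_neg h, Fin.cons_succ]
      ring

lemma prep_shift (m k : ℕ) (a : ZMod m) (x : Fin k → ZMod m) :
    prep m a (fun j => x j - 1) = fun t => prep m (a+1) x t - 1 := by
  funext t
  refine Fin.cases ?_ (fun t' => ?_) t <;> simp [prep]

lemma E3 (m k : ℕ) (w : (Fin (k+1) → ZMod m) → ℤ) (a : ZMod m) (x : Fin (k+1) → ZMod m) :
    w x = Dop m k (fun y => w (prep m a y)) x + Dop m (k+1) w (prep m a x) := by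
  have h2 : Dop m (k+1) w (prep m a x)
      = w x - Dop m k (fun y => w (prep m a y)) x := by
    unfold Dop
    rw [Fin.sum_univ_succ]
    rw [dr_zero_prep]
    simp only [Fin.val_zero, pow_zero, one_mul, Fin.val_succ]
    rw [sub_eq_add_neg, ← Finset.sum_neg_distrib]
    congr 1
    refine Finset.sum_congr rfl fun i _ => ?_
    rw [dr_succ_prep, pow_succ]
    ring
  rw [h2]; ring

lemma Dop_lin3 (m k : ℕ) (α β γ : ℤ) (u v w : (Fin k → ZMod m) → ℤ)
    (x : Fin (k+1) → ZMod m) :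
    Dop m k (fun y => α * u y + β * v y + γ * w y) x
      = α * Dop m k u x + β * Dop m k v x + γ * Dop m k w x := by
  unfold Dop
  rw [Finset.mul_sum, Finset.mul_sum, Finset.mul_sum, ← Finset.sum_add_distrib,
    ← Finset.sum_add_distrib]
  exact Finset.sum_congr rfl fun i _ => by ring

lemma delta_lin3 (m k : ℕ) (α β γ : ℤ) (u v w : (Fin k → ZMod m) → ℤ)
    (x : Fin (k+1) → ZMod m) :
    delta m k (fun y => α * u y + β * v y + γ * w y) x
      = α * delta m k u x + β * delta m k v x + γ * delta m k w x := by
  rw [E1, E1, E1, E1, Dop_lin3, Dop_lin3]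
  ring

lemma Dop_sum (m k : ℕ) {ι : Type*} (s : Finset ι) (F : ι → (Fin k → ZMod m) → ℤ)
    (x : Fin (k+1) → ZMod m) :
    Dop m k (fun y => ∑ a ∈ s, F a y) x = ∑ a ∈ s, Dop m k (F a) x := by
  unfold Dop
  simp only [Finset.mul_sum]
  exact Finset.sum_comm

lemma delta_sum (m k : ℕ) {ι : Type*} (s : Finset ι) (F : ι → (Fin k → ZMod m) → ℤ)
    (x : Fin (k+1) → ZMod m) :
    delta m k (fun y => ∑ a ∈ s, F a y) x = ∑ a ∈ s, delta m k (F a) x := by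
  rw [E1, Dop_sum, Dop_sum, ← Finset.sum_sub_distrib]
  exact Finset.sum_congr rfl fun a _ => (E1 m k (F a) x).symm

def Qf (m n : ℕ) (f : (Fin (n+1) → ZMod m) → ℤ) : (Fin (n+1) → ZMod m) → ℤ :=
  fun x => ∑ j ∈ Finset.range m, ∑ i ∈ Finset.range j, f (fun t => x t - (i : ZMod m))

lemma sum_shift (m : ℕ) [NeZero m] (F : ZMod m → ℤ) :
    ∑ a : ZMod m, F (a + 1) = ∑ a : ZMod m, F a :=
  Fintype.sum_equiv (Equiv.addRight 1) _ _ (fun _ => rfl)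

lemma sum_range_eq (m : ℕ) [NeZero m] (F : ZMod m → ℤ) :
    ∑ j ∈ Finset.range m, F ((j : ℕ) : ZMod m) = ∑ v : ZMod m, F v := by
  refine Finset.sum_nbij' (fun j => ((j : ℕ) : ZMod m)) (fun v => v.val) ?_ ?_ ?_ ?_ ?_
  · intro a _; exact Finset.mem_univ _
  · intro v _; exact Finset.mem_range.mpr (ZMod.val_lt v)
  · intro a ha; exact ZMod.val_cast_of_lt (Finset.mem_range.mp ha)
  · intro v _; exact ZMod.natCast_rightInverse v
  · intro a _; rfl

lemma HDQ (m n : ℕ) (f : (Fin (n+1) → ZMod m) → ℤ)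
    (Hc : ∀ x, Dop m (n+1) f (fun j => x j - 1) = Dop m (n+1) f x) :
    ∀ (i : ℕ) (x : Fin (n+2) → ZMod m),
      Dop m (n+1) f (fun j => x j - (i : ZMod m)) = Dop m (n+1) f x := by
  intro i
  induction i with
  | zero => intro x; simp
  | succ i ih =>
    intro x
    have e : (fun j => x j - ((i+1 : ℕ) : ZMod m))
        = fun j => (fun t => x t - (i : ZMod m)) j - 1 := by
      funext j; push_cast; ring
    rw [e, Hc, ih]

lemma Dop_Qf (m n : ℕ) (f : (Fin (n+1) → ZMod m) → ℤ)
    (Hc : ∀ x, Dop m (n+1) f (fun j => x j - 1) = Dop m (n+1) f x) :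
    ∀ x, Dop m (n+1) (Qf m n f) x
      = (∑ j ∈ Finset.range m, (j : ℤ)) * Dop m (n+1) f x := by
  intro x
  have step1 : ∀ i' : Fin (n+2), Qf m n f (dr m (n+1) i' x)
      = ∑ j ∈ Finset.range m, ∑ i ∈ Finset.range j,
          f (dr m (n+1) i' (fun t => x t - (i : ZMod m))) := by
    intro i'
    refine Finset.sum_congr rfl fun j _ => Finset.sum_congr rfl fun i _ => ?_
    rw [dr_shift]
  calc Dop m (n+1) (Qf m n f) x
      = ∑ i' : Fin (n+2), ∑ j ∈ Finset.range m, ∑ i ∈ Finset.range j,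
          (-1:ℤ)^(i':ℕ) * f (dr m (n+1) i' (fun t => x t - (i : ZMod m))) := by
        unfold Dop
        refine Finset.sum_congr rfl fun i' _ => ?_
        rw [step1, Finset.mul_sum]
        exact Finset.sum_congr rfl fun j _ => (Finset.mul_sum _ _ _)
    _ = ∑ j ∈ Finset.range m, ∑ i ∈ Finset.range j, Dop m (n+1) f (fun t => x t - (i : ZMod m)) := by
        rw [Finset.sum_comm]
        refine Finset.sum_congr rfl fun j _ => ?_
        rw [Finset.sum_comm]
        rfl
    _ = ∑ j ∈ Finset.range m, ∑ _i ∈ Finset.range j, Dop m (n+1) f x := by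
        exact Finset.sum_congr rfl fun j _ => Finset.sum_congr rfl fun i _ => HDQ m n f Hc i x
    _ = (∑ j ∈ Finset.range m, (j : ℤ)) * Dop m (n+1) f x := by
        rw [Finset.sum_mul]
        refine Finset.sum_congr rfl fun j _ => ?_
        simp [Finset.sum_const, mul_comm]

lemma HmQ (m n : ℕ) [NeZero m] (f : (Fin (n+1) → ZMod m) → ℤ)
    (HN : ∀ x : Fin (n+1) → ZMod m, ∑ v : ZMod m, f (fun j => x j - v) = 0) :
    ∀ x, (m : ℤ) * f x = Qf m n f x - Qf m n f (fun j => x j - 1) := by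
  intro x
  set G : ℕ → ℤ := fun i => f (fun t => x t - (i : ZMod m)) with hG
  have e1 : Qf m n f (fun j => x j - 1)
      = ∑ j ∈ Finset.range m, ∑ i ∈ Finset.range j, G (i+1) := by
    refine Finset.sum_congr rfl fun j _ => Finset.sum_congr rfl fun i _ => ?_
    simp only [hG]
    congr 1; funext t; push_cast; ring
  have e2 : ∀ j, ∑ i ∈ Finset.range j, G (i+1)
      = (∑ i ∈ Finset.range (j+1), G i) - G 0 := by
    intro j; rw [Finset.sum_range_succ']; ring
  have e4 : Qf m n f x = ∑ j ∈ Finset.range m, ∑ i ∈ Finset.range j, G i := rfl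
  have e5 : Qf m n f (fun j => x j - 1) - Qf m n f x
      = (∑ j ∈ Finset.range m, G j) - m * G 0 := by
    rw [e1, e4, ← Finset.sum_sub_distrib]
    have step : ∀ j, (∑ i ∈ Finset.range j, G (i+1)) - ∑ i ∈ Finset.range j, G i
        = G j - G 0 := by
      intro j; rw [e2 j, Finset.sum_range_succ]; ring
    rw [Finset.sum_congr rfl fun j _ => step j, Finset.sum_sub_distrib]
    simp [Finset.sum_const, Finset.card_range, nsmul_eq_mul]
  have e6 : ∑ j ∈ Finset.range m, G j = 0 := by
    have h1 : ∀ j ∈ Finset.range m, G j = (fun v => f (fun t => x t - v)) ((j:ℕ) : ZMod m) :=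
      fun j _ => rfl
    rw [Finset.sum_congr rfl h1, sum_range_eq m (fun v => f (fun t => x t - v))]
    exact HN x
  have hG0 : G 0 = f x := by
    simp only [hG, Nat.cast_zero, sub_zero]
  rw [← hG0]
  linarith [e5, e6]

lemma KA (m n : ℕ) (w : (Fin (n+1) → ZMod m) → ℤ) (a : ZMod m) (x : Fin (n+1) → ZMod m) :
    delta m n (fun y => w (prep m a y)) x
      = (w (fun j => x j - 1) - w x)
        - (Dop m (n+1) w (fun t => prep m (a+1) x t - 1) - Dop m (n+1) w (prep m a x)) := by
  rw [E1]
  have e1 := E3 m n w a (fun j => x j - 1)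
  have e2 := E3 m n w a x
  rw [prep_shift] at e1
  linarith


/-- STATEMENT 16: for even `m`, the torsion of `H^n_{YB}(C_m;ℤ)` is annihilated by `2m`:
if `f` is an integral `n`-cocycle of the Yang–Baxter cochain complex of the cyclic
biquandle `C_m` some positive multiple `k·f` of which is a coboundary, then `2m·f` is itself
a coboundary. (The degree `n ≥ 1` is realized as `n+1` with `n : ℕ` arbitrary.) -/
theorem torsion_annihilated_by_two_m_of_even (m n : ℕ) (hm : Even m) (hm' : 2 ≤ m)
    (f : (Fin (n + 1) → ZMod m) → ℤ) (hf : delta m (n + 1) f = 0)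
    (k : ℕ) (hk : 1 ≤ k) (g : (Fin n → ZMod m) → ℤ)
    (hg : delta m n g = fun x => (k : ℤ) * f x) :
    ∃ h : (Fin n → ZMod m) → ℤ, delta m n h = fun x => 2 * (m : ℤ) * f x := by
  haveI : NeZero m := ⟨by omega⟩
  -- the cocycle condition: Dop f is shift-invariant
  have Hc : ∀ x, Dop m (n+1) f (fun j => x j - 1) = Dop m (n+1) f x := by
    intro x
    have e := E1 m (n+1) f x
    have h0 : delta m (n+1) f x = 0 := by rw [hf]; rfl
    rw [h0] at e
    linarith
  -- torsion implies the sum of all shifts of f vanishes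
  have HN : ∀ x : Fin (n+1) → ZMod m, ∑ v : ZMod m, f (fun j => x j - v) = 0 := by
    intro x
    have h1 : (k:ℤ) * ∑ v : ZMod m, f (fun j => x j - v) = 0 := by
      rw [Finset.mul_sum]
      have hterm : ∀ v : ZMod m, (k:ℤ) * f (fun j => x j - v)
          = Dop m n g (fun j => (fun t => x t - v) j - 1) - Dop m n g (fun j => x j - v) := by
        intro v
        have e := E1 m n g (fun j => x j - v)
        have e2 : delta m n g (fun j => x j - v) = (k:ℤ) * f (fun j => x j - v) := by
          rw [hg]
        linarith
      rw [Finset.sum_congr rfl fun v _ => hterm v, Finset.sum_sub_distrib]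
      have e3 : ∑ v : ZMod m, Dop m n g (fun j => (fun t => x t - v) j - 1)
          = ∑ v : ZMod m, Dop m n g (fun j => x j - v) := by
        rw [← sum_shift m (fun v => Dop m n g (fun j => x j - v))]
        refine Finset.sum_congr rfl fun v _ => ?_
        congr 1; funext j; ring
      rw [e3]; ring
    have hk0 : (k:ℤ) ≠ 0 := by
      simp only [ne_eq, Nat.cast_eq_zero]; omega
    exact (mul_eq_zero.mp h1).resolve_left hk0
  set r : ℤ := ∑ j ∈ Finset.range m, (j:ℤ) with hrdef
  have hr : 2 * r = (m:ℤ) * ((m:ℤ) - 1) := by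
    have h1 := Finset.sum_range_id_mul_two m
    have h2 : r = ((∑ i ∈ Finset.range m, i : ℕ) : ℤ) := by
      rw [hrdef, Nat.cast_sum]
    rw [h2]
    have h3 : ((∑ i ∈ Finset.range m, i : ℕ) : ℤ) * 2 = (((m * (m-1) : ℕ)) : ℤ) := by
      exact_mod_cast congrArg (Nat.cast : ℕ → ℤ) h1
    push_cast [Nat.cast_sub (by omega : 1 ≤ m)] at h3
    linarith
  -- key identities
  have I1 : ∀ (a : ZMod m) (x : Fin (n+1) → ZMod m),
      delta m n (fun y => f (prep m a y)) x
        = (f (fun j => x j - 1) - f x)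
          - (Dop m (n+1) f (prep m (a+1) x) - Dop m (n+1) f (prep m a x)) := by
    intro a x
    rw [KA, Hc]
  have I2 : ∀ x : Fin (n+1) → ZMod m,
      delta m n (fun y => Qf m n f (prep m 0 y)) x
        = -((m:ℤ) * f x)
          - (r * Dop m (n+1) f (prep m 1 x) - r * Dop m (n+1) f (prep m 0 x)) := by
    intro x
    rw [KA]
    rw [Dop_Qf m n f Hc, Dop_Qf m n f Hc, Hc, ← hrdef]
    have := HmQ m n f HN x
    rw [zero_add]
    linarith
  have I3 : ∀ x : Fin (n+1) → ZMod m,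
      delta m n (fun y => ∑ a : ZMod m, f (prep m a y)) x
        = (m:ℤ) * (f (fun j => x j - 1) - f x) := by
    intro x
    rw [delta_sum]
    rw [Finset.sum_congr rfl fun a _ => I1 a x]
    simp only [Finset.sum_sub_distrib]
    rw [sum_shift m (fun a => Dop m (n+1) f (prep m a x))]
    simp only [Finset.sum_const, Finset.card_univ, ZMod.card, nsmul_eq_mul, sub_self]
    ring
  refine ⟨fun y => (1 - (m:ℤ)) * (∑ a : ZMod m, f (prep m a y))
      + ((m:ℤ) * ((m:ℤ) - 1)) * f (prep m 0 y) + (-2) * Qf m n f (prep m 0 y), ?_⟩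
  funext x
  rw [delta_lin3, I3 x, I2 x]
  have i1 := I1 0 x
  rw [zero_add] at i1
  rw [i1]
  linear_combination (Dop m (n+1) f (prep m 1 x) - Dop m (n+1) f (prep m 0 x)) * hr
end
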